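/- arXiv:1401.1792 — 8 statements merged into one kernel-verified Lean document; each statement's English description precedes it below -/
import Mathlib

section
/- Let x̄ ∈ Q and R > 0, and let f be a convex function on Q, subdifferentiable at the iterates below. Consider the dual averaging iterates: x₀ = x̄, s₀ = 0, and for i ≥ 0, g_i ∈ ∂f(x_i), s_{i+1} = s_i + λ_i g_i with stepsizes λ_i > 0, and x_{i+1} is a maximizer over Q_R(x̄) of x ↦ ⟨−s_{i+1}, x − x̄⟩ − β_{i+1} d_{x̄,R}(x), where 0 < β₀ ≤ β₁ ≤ β₂ ≤ ⋯ is nondecreasing. Then for every k ≥ 0 and every x ∈ Q_R(x̄): Σ_{i=0}^{k} λ_i ⟨g_i, x_i − x⟩ ≤ β_{k+1} d_{x̄,R}(x) + (R²/(2 μ(d))) Σ_{i=0}^{k} (λ_i²/β_i) ‖g_i‖_*². -/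
/-!
The objective `φₙ(y) = βₙ h(y) + sₙ(y - x̄)` of the `n`-th step, with `h = d_{x̄,R}`, is strongly
convex with modulus `βₙ μ(d) / R²` on `Q_R(x̄)`, so it grows quadratically away from its minimizer
`xₙ`. Hence passing from `φₙ` to `φₙ₊₁` raises the minimal value by at least
`λₙ⟨gₙ, xₙ - x̄⟩ - R² λₙ² ‖gₙ‖²_* / (2 μ(d) βₙ)`: the linear error `λₙ⟨gₙ, xₙ₊₁ - xₙ⟩` is absorbed by
the quadratic growth, and `βₙ ≤ βₙ₊₁` with `h ≥ 0`. Summing, and comparing the minimal value of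
`φₖ₊₁` with its value at `x`, gives the regret bound.
-/

open Filter Topology Finset Metric

section StrongConvexity

variable {E : Type*} [NormedAddCommGroup E] [NormedSpace ℝ E] {s t : Set E} {m : ℝ} {f : E → ℝ}

lemma strongConvexOn_of_forall_mem_Icc (hs : Convex ℝ s)
    (hf : ∀ x ∈ s, ∀ y ∈ s, ∀ α ∈ Set.Icc (0 : ℝ) 1,
      f (α • x + (1 - α) • y) ≤ α * f x + (1 - α) * f y - m / 2 * α * (1 - α) * ‖x - y‖ ^ 2) :
    StrongConvexOn s m f := by
  refine ⟨hs, fun x hx y hy a b ha hb hab ↦ ?_⟩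
  obtain rfl : b = 1 - a := by linarith
  have := hf x hx y hy a ⟨ha, by linarith⟩
  simp only [smul_eq_mul]
  linarith

lemma StrongConvexOn.subset (hf : StrongConvexOn s m f) (hts : t ⊆ s) (ht : Convex ℝ t) :
    StrongConvexOn t m f :=
  ⟨ht, fun _ hx _ hy _ _ ha hb hab ↦ hf.2 (hts hx) (hts hy) ha hb hab⟩

lemma StrongConvexOn.const_mul (hf : StrongConvexOn s m f) {b : ℝ} (hb : 0 ≤ b) :
    StrongConvexOn s (b * m) fun x ↦ b * f x := by
  refine ⟨hf.1, fun x hx y hy a c ha hc hac ↦ ?_⟩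
  have := mul_le_mul_of_nonneg_left (hf.2 hx hy ha hc hac) hb
  simp only [smul_eq_mul] at this ⊢
  linarith

lemma StrongConvexOn.add_convexOn {g : E → ℝ} (hf : StrongConvexOn s m f)
    (hg : ConvexOn ℝ s g) : StrongConvexOn s m (f + g) := by
  simpa [StrongConvexOn] using hf.add hg.uniformConvexOn_zero

lemma StrongConvexOn.comp_smul_sub (hf : StrongConvexOn s m f) (c : ℝ) (z : E) :
    StrongConvexOn ((fun y ↦ c • (y - z)) ⁻¹' s) (m * c ^ 2) fun y ↦ f (c • (y - z)) := by
  have hcomb : ∀ (x y : E) (a b : ℝ), a + b = 1 →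
      c • (a • x + b • y - z) = a • (c • (x - z)) + b • (c • (y - z)) := by
    rintro x y a b hab
    obtain rfl : b = 1 - a := by linarith
    module
  refine ⟨fun x hx y hy a b ha hb hab ↦ ?_, fun x hx y hy a b ha hb hab ↦ ?_⟩
  · simpa [Set.mem_preimage, hcomb x y a b hab] using hf.1 hx hy ha hb hab
  · have hnorm : ‖c • (x - z) - c • (y - z)‖ = |c| * ‖x - y‖ := by
      rw [← smul_sub, sub_sub_sub_cancel_right, norm_smul, Real.norm_eq_abs]
    have := hf.2 hx hy ha hb hab
    simp only [hnorm, mul_pow, sq_abs, smul_eq_mul] at this ⊢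
    rw [hcomb x y a b hab]
    linarith

lemma StrongConvexOn.add_sq_le_of_isMinOn {x y : E} (hf : StrongConvexOn s m f) (hx : x ∈ s)
    (hmin : IsMinOn f s x) (hy : y ∈ s) : f x + m / 2 * ‖y - x‖ ^ 2 ≤ f y := by
  have hchord : ∀ t ∈ Set.Ioo (0 : ℝ) 1, f x + (1 - t) * (m / 2 * ‖y - x‖ ^ 2) ≤ f y := by
    rintro t ⟨ht0, ht1⟩
    have hmid : f x ≤ f (t • y + (1 - t) • x) :=
      hmin (hf.1 hy hx ht0.le (by linarith) (by ring))
    have hconv := hf.2 hy hx ht0.le (by linarith) (add_sub_cancel t 1)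
    simp only [smul_eq_mul] at hconv
    nlinarith
  have hlim : Tendsto (fun t : ℝ ↦ f x + (1 - t) * (m / 2 * ‖y - x‖ ^ 2)) (𝓝[>] 0)
      (𝓝 (f x + (1 - 0) * (m / 2 * ‖y - x‖ ^ 2))) :=
    ((continuous_const.add ((continuous_const.sub continuous_id).mul continuous_const)).tendsto
      0).mono_left nhdsWithin_le_nhds
  simpa using le_of_tendsto hlim (eventually_of_mem (Ioo_mem_nhdsGT one_pos) hchord)

end StrongConvexity

lemma ContinuousLinearMap.neg_sq_norm_div_le_apply_add {E : Type*} [NormedAddCommGroup E]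
    [NormedSpace ℝ E] (ℓ : E →L[ℝ] ℝ) (v : E) {c : ℝ} (hc : 0 < c) :
    -(‖ℓ‖ ^ 2 / (2 * c)) ≤ ℓ v + c / 2 * ‖v‖ ^ 2 := by
  have hℓv : -(‖ℓ‖ * ‖v‖) ≤ ℓ v := neg_le_of_abs_le (ℓ.le_opNorm v)
  have hamgm : ‖ℓ‖ * ‖v‖ ≤ ‖ℓ‖ ^ 2 / (2 * c) + c / 2 * ‖v‖ ^ 2 := by
    rw [div_add' _ _ _ (by positivity), le_div_iff₀ (by positivity)]
    nlinarith [sq_nonneg (‖ℓ‖ - c * ‖v‖)]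
  linarith

section DualAveraging

variable {E : Type*} [NormedAddCommGroup E] [NormedSpace ℝ E] {C : Set E} {h : E → ℝ}
  {σ : ℝ} {xbar : E}

lemma dualAveraging_step {s ℓ : E →L[ℝ] ℝ} {b b' : ℝ} {x x' : E}
    (hh : StrongConvexOn C σ h) (hh0 : ∀ y ∈ C, 0 ≤ h y) (hσ : 0 < σ) (hb : 0 < b)
    (hbb' : b ≤ b') (hx : x ∈ C) (hmin : IsMinOn (fun y ↦ b * h y + s (y - xbar)) C x)
    (hx' : x' ∈ C) :
    b * h x + s (x - xbar) + (ℓ (x - xbar) - ‖ℓ‖ ^ 2 / (2 * (b * σ))) ≤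
      b' * h x' + (s + ℓ) (x' - xbar) := by
  have hlin : ConvexOn ℝ C fun y ↦ s (y - xbar) := by
    have hfun : (fun y ↦ s (y - xbar)) = ⇑s + fun _ ↦ -s xbar := by
      ext y
      simp [sub_eq_add_neg]
    rw [hfun]
    exact (s.toLinearMap.convexOn hh.1).add_const _
  have hgrowth := (hh.const_mul hb.le).add_convexOn hlin |>.add_sq_le_of_isMinOn hx hmin hx'
  have hquad := ℓ.neg_sq_norm_div_le_apply_add (x' - x) (mul_pos hb hσ)
  have hsplit : ℓ (x' - xbar) = ℓ (x - xbar) + ℓ (x' - x) := by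
    rw [← map_add, sub_add_sub_cancel']
  have hmono : b * h x' ≤ b' * h x' := mul_le_mul_of_nonneg_right hbb' (hh0 x' hx')
  simp only [Pi.add_apply, _root_.add_apply] at hgrowth ⊢
  linarith

variable {β : ℕ → ℝ} {ℓ : ℕ → E →L[ℝ] ℝ} {x : ℕ → E}

lemma dualAveraging_sum_le (hh : StrongConvexOn C σ h) (hh0 : ∀ y ∈ C, 0 ≤ h y) (hσ : 0 < σ)
    (hβ : ∀ n, 0 < β n) (hβm : Monotone β) (hx : ∀ n, x n ∈ C)
    (hmin : ∀ n, IsMinOn (fun y ↦ β n * h y + (∑ i ∈ range n, ℓ i) (y - xbar)) C (x n))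
    (n : ℕ) :
    ∑ i ∈ range n, (ℓ i (x i - xbar) - ‖ℓ i‖ ^ 2 / (2 * (β i * σ))) ≤
      β n * h (x n) + (∑ i ∈ range n, ℓ i) (x n - xbar) := by
  induction n with
  | zero => simpa using mul_nonneg (hβ 0).le (hh0 _ (hx 0))
  | succ n ih =>
    rw [sum_range_succ, sum_range_succ]
    exact (add_le_add_left ih _).trans <| dualAveraging_step hh hh0 hσ (hβ n)
      (hβm n.le_succ) (hx n) (hmin n) (hx (n + 1))

theorem dualAveraging_regret_le (hh : StrongConvexOn C σ h) (hh0 : ∀ y ∈ C, 0 ≤ h y)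
    (hσ : 0 < σ) (hβ : ∀ n, 0 < β n) (hβm : Monotone β) (hx : ∀ n, x n ∈ C)
    (hmin : ∀ n, IsMinOn (fun y ↦ β n * h y + (∑ i ∈ range n, ℓ i) (y - xbar)) C (x n))
    (n : ℕ) {y : E} (hy : y ∈ C) :
    ∑ i ∈ range n, ℓ i (x i - y) ≤
      β n * h y + ∑ i ∈ range n, ‖ℓ i‖ ^ 2 / (2 * (β i * σ)) := by
  have hsum := dualAveraging_sum_le hh hh0 hσ hβ hβm hx hmin n
  have hy_min : β n * h (x n) + (∑ i ∈ range n, ℓ i) (x n - xbar) ≤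
      β n * h y + (∑ i ∈ range n, ℓ i) (y - xbar) := hmin n hy
  have hsplit : ∑ i ∈ range n, ℓ i (x i - y) =
      ∑ i ∈ range n, ℓ i (x i - xbar) - (∑ i ∈ range n, ℓ i) (y - xbar) := by
    rw [_root_.sum_apply, ← sum_sub_distrib]
    exact sum_congr rfl fun i _ ↦ by rw [← map_sub, sub_sub_sub_cancel_right]
  rw [sum_sub_distrib] at hsum
  linarith

end DualAveraging

lemma one_div_smul_sub_mem_closedBall_zero_one {E : Type*} [NormedAddCommGroup E]
    [NormedSpace ℝ E] {z y : E} {R : ℝ} (hR : 0 < R) (hy : y ∈ closedBall z R) :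
    (1 / R) • (y - z) ∈ closedBall (0 : E) 1 := by
  rw [mem_closedBall_zero_iff, norm_smul, Real.norm_of_nonneg (by positivity), one_div,
    inv_mul_le_one₀ hR, ← dist_eq_norm]
  exact hy

theorem dual_averaging_regret_general
    {E : Type*} [NormedAddCommGroup E] [NormedSpace ℝ E]
    (Q : Set E) (hQconv : Convex ℝ Q)
    (d : E → ℝ) (μd : ℝ) (hμd : 0 < μd)
    (hd_sc : ∀ x ∈ Metric.closedBall (0 : E) 1, ∀ y ∈ Metric.closedBall (0 : E) 1,
      ∀ α ∈ Set.Icc (0 : ℝ) 1,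
      d (α • x + (1 - α) • y) ≤
        α * d x + (1 - α) * d y - (μd / 2) * α * (1 - α) * ‖x - y‖ ^ 2)
    (hd0 : d 0 = 0)
    (hd_nonneg : ∀ x ∈ Metric.closedBall (0 : E) 1, 0 ≤ d x)
    (xbar : E) (hxbar : xbar ∈ Q) (R : ℝ) (hR : 0 < R)
    (xs : ℕ → E) (g : ℕ → E →L[ℝ] ℝ) (s : ℕ → E →L[ℝ] ℝ)
    (lam : ℕ → ℝ)
    (β : ℕ → ℝ) (hβ0 : 0 < β 0) (hβmono : Monotone β)
    (hx0 : xs 0 = xbar) (hs0 : s 0 = 0)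
    (hsrec : ∀ i, s (i + 1) = s i + lam i • g i)
    (hxrec : ∀ i, xs (i + 1) ∈ Q ∩ Metric.closedBall xbar R ∧
      ∀ y ∈ Q ∩ Metric.closedBall xbar R,
        (-(s (i + 1))) (y - xbar) - β (i + 1) * d ((1 / R) • (y - xbar)) ≤
          (-(s (i + 1))) (xs (i + 1) - xbar)
            - β (i + 1) * d ((1 / R) • (xs (i + 1) - xbar))) :
    ∀ k : ℕ, ∀ x ∈ Q ∩ Metric.closedBall xbar R,
      ∑ i ∈ Finset.range (k + 1), lam i * (g i) (xs i - x) ≤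
        β (k + 1) * d ((1 / R) • (x - xbar)) +
          R ^ 2 / (2 * μd) *
            ∑ i ∈ Finset.range (k + 1), (lam i) ^ 2 / β i * ‖g i‖ ^ 2 := by
  set C := Q ∩ closedBall xbar R
  set h : E → ℝ := fun y ↦ d ((1 / R) • (y - xbar))
  have hβ (n : ℕ) : 0 < β n := hβ0.trans_le (hβmono n.zero_le)
  set σ := μd * (1 / R) ^ 2
  have hh : StrongConvexOn C σ h :=
    ((strongConvexOn_of_forall_mem_Icc (convex_closedBall 0 1) hd_sc).comp_smul_sub
      (1 / R) xbar).subset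
      (fun y hy ↦ one_div_smul_sub_mem_closedBall_zero_one hR hy.2)
      (hQconv.inter (convex_closedBall xbar R))
  have hh0 : ∀ y ∈ C, 0 ≤ h y := fun y hy ↦
    hd_nonneg _ (one_div_smul_sub_mem_closedBall_zero_one hR hy.2)
  have hs (n : ℕ) : s n = ∑ i ∈ range n, lam i • g i :=
    (sum_range_induction _ s hs0 n fun k _ ↦ hsrec k).symm
  have hmin (n : ℕ) : xs n ∈ C ∧
      IsMinOn (fun y ↦ β n * h y + (∑ i ∈ range n, lam i • g i) (y - xbar)) C (xs n) := by
    cases n with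
    | zero =>
      refine ⟨hx0 ▸ ⟨hxbar, mem_closedBall_self hR.le⟩, isMinOn_iff.2 fun y hy ↦ ?_⟩
      simpa [h, hx0, hd0] using mul_nonneg (hβ 0).le (hh0 y hy)
    | succ n =>
      refine ⟨(hxrec n).1, isMinOn_iff.2 fun y hy ↦ ?_⟩
      have := (hxrec n).2 y hy
      simp only [hs, h, neg_apply] at this ⊢
      linarith
  intro k x hx
  calc ∑ i ∈ range (k + 1), lam i * g i (xs i - x)
      = ∑ i ∈ range (k + 1), (lam i • g i) (xs i - x) := by simp
    _ ≤ β (k + 1) * h x + ∑ i ∈ range (k + 1), ‖lam i • g i‖ ^ 2 / (2 * (β i * σ)) :=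
      dualAveraging_regret_le hh hh0 (by positivity) hβ hβmono (fun n ↦ (hmin n).1)
        (fun n ↦ (hmin n).2) (k + 1) hx
    _ = _ := by
      rw [mul_sum]
      refine congrArg _ (sum_congr rfl fun i _ ↦ ?_)
      rw [norm_smul, mul_pow, Real.norm_eq_abs, sq_abs]
      simp only [σ]
      field_simp [(hβ i).ne']

/-- Proposition 2.1 / dual averaging regret bound.
`E` is a finite-dimensional real normed space, dual elements are continuous linear
functionals with the operator (dual) norm. `Q` is a closed convex set, `d` is a
prox-function of the unit ball with strong convexity parameter `μd > 0`.
Dual averaging iterates with stepsizes `lam i > 0` and nondecreasing gains `β`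
satisfy the stated regret bound. -/
theorem dual_averaging_regret
    {E : Type*} [NormedAddCommGroup E] [NormedSpace ℝ E] [FiniteDimensional ℝ E]
    (Q : Set E) (hQc : IsClosed Q) (hQconv : Convex ℝ Q)
    (d : E → ℝ) (μd : ℝ) (hμd : 0 < μd)
    (hd_cont : ContinuousOn d (Metric.closedBall (0 : E) 1))
    (hd_sc : ∀ x ∈ Metric.closedBall (0 : E) 1, ∀ y ∈ Metric.closedBall (0 : E) 1,
      ∀ α ∈ Set.Icc (0 : ℝ) 1,
      d (α • x + (1 - α) • y) ≤
        α * d x + (1 - α) * d y - (μd / 2) * α * (1 - α) * ‖x - y‖ ^ 2)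
    (hd0 : d 0 = 0)
    (hd_nonneg : ∀ x ∈ Metric.closedBall (0 : E) 1, 0 ≤ d x)
    (f : E → ℝ) (hf : ConvexOn ℝ Q f)
    (xbar : E) (hxbar : xbar ∈ Q) (R : ℝ) (hR : 0 < R)
    (xs : ℕ → E) (g : ℕ → E →L[ℝ] ℝ) (s : ℕ → E →L[ℝ] ℝ)
    (lam : ℕ → ℝ) (hlam : ∀ i, 0 < lam i)
    (β : ℕ → ℝ) (hβ0 : 0 < β 0) (hβmono : Monotone β)
    (hx0 : xs 0 = xbar) (hs0 : s 0 = 0)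
    (hsub : ∀ i, ∀ y ∈ Q, f (xs i) + (g i) (y - xs i) ≤ f y)
    (hsrec : ∀ i, s (i + 1) = s i + lam i • g i)
    (hxrec : ∀ i, xs (i + 1) ∈ Q ∩ Metric.closedBall xbar R ∧
      ∀ y ∈ Q ∩ Metric.closedBall xbar R,
        (-(s (i + 1))) (y - xbar) - β (i + 1) * d ((1 / R) • (y - xbar)) ≤
          (-(s (i + 1))) (xs (i + 1) - xbar)
            - β (i + 1) * d ((1 / R) • (xs (i + 1) - xbar))) :
    ∀ k : ℕ, ∀ x ∈ Q ∩ Metric.closedBall xbar R,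
      ∑ i ∈ Finset.range (k + 1), lam i * (g i) (xs i - x) ≤
        β (k + 1) * d ((1 / R) • (x - xbar)) +
          R ^ 2 / (2 * μd) *
            ∑ i ∈ Finset.range (k + 1), (lam i) ^ 2 / β i * ‖g i‖ ^ 2 :=
  dual_averaging_regret_general Q hQconv d μd hμd hd_sc hd0 hd_nonneg xbar hxbar R hR xs g s lam β
    hβ0 hβmono hx0 hs0 hsrec hxrec
end

section
/- Let f be uniformly convex on Q with parameters ρ ≥ 2 and μ(f) > 0, with all subgradients of f on Q bounded by L > 0 in dual norm, let x̄ ∈ Q, R > 0, and let x* be a minimizer of f over Q_R(x̄). Run dual averaging with λ_i = 1 and β_i = γ√(N+1) where γ = L R / √(2 μ(d) A(d)), with output x_N(x̄,R) = (1/(N+1)) Σ_{i=0}^{N} x_i. Then f(x_N(x̄,R)) − f(x*) ≤ L R √(2 A(d)/(μ(d)(N+1))) and ‖x_N(x̄,R) − x*‖^ρ ≤ (L R/μ(f)) √(2 A(d)/(μ(d)(N+1))). -/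
/-!
Uniform convexity of degree `ρ`, with the convex-combination weight sent to `0`, gives the growth
bound `f x + g (y - x) + μ/2 ‖y - x‖^ρ ≤ f y` for a subgradient `g` at `x`, and
`f x⋆ + μ/2 ‖y - x⋆‖^ρ ≤ f y` at a constrained minimizer `x⋆`. The dual averaging objective
`s_n y + β d((y - x̄)/R)` is uniformly convex of degree `2` with parameter `β μ(d) / R²`, so its
minimal value increases at each step by at least `g_n x_n - L² R² / (2 β μ(d))`. Telescoping and
comparing with its value at `x⋆` bounds the regret `∑ g_i (x_i - x⋆)` by
`β A + (N+1) L² R² / (2 β μ(d))`, and the tuned `β` balances the two terms. Jensen's inequality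
for `f + μ/2 ‖· - x⋆‖^ρ` and the growth bound at `x⋆` then turn the averaged regret into both
estimates.
-/

open Real Filter Set Finset

theorem le_of_forall_weight_mul_le {ρ k T : ℝ} (hρ : 1 < ρ)
    (h : ∀ α ∈ Ioo (0 : ℝ) 1, (1 - α) * (α ^ (ρ - 1) + (1 - α) ^ (ρ - 1)) * k ≤ T) :
    k ≤ T := by
  have hcont : ContinuousAt
      (fun α : ℝ => (1 - α) * (α ^ (ρ - 1) + (1 - α) ^ (ρ - 1)) * k) 0 := by
    fun_prop (disch := right; linarith)
  have hlim := hcont.tendsto.mono_left (nhdsWithin_le_nhds (s := Ioi 0))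
  simp only [sub_zero, one_mul, zero_rpow (by linarith : ρ - 1 ≠ 0), one_rpow, zero_add] at hlim
  exact le_of_tendsto hlim (eventually_of_mem (Ioo_mem_nhdsGT one_pos) h)

section

variable {E : Type*} [NormedAddCommGroup E] [NormedSpace ℝ E]

/-- Unlike Mathlib's `UniformConvexOn`, the modulus depends on the weight `α`; letting `α → 0`
recovers the full constant `μ / 2` in the growth bounds. -/
def UniformConvexOfDegreeOn (s : Set E) (ρ μ : ℝ) (f : E → ℝ) : Prop :=
  ∀ x ∈ s, ∀ y ∈ s, ∀ α ∈ Icc (0 : ℝ) 1,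
    f (α • x + (1 - α) • y) ≤
      α * f x + (1 - α) * f y -
        (μ / 2) * α * (1 - α) * (α ^ (ρ - 1) + (1 - α) ^ (ρ - 1)) * ‖x - y‖ ^ ρ

theorem uniformConvexOfDegreeOn_two_iff {s : Set E} {μ : ℝ} {f : E → ℝ} :
    UniformConvexOfDegreeOn s 2 μ f ↔ ∀ x ∈ s, ∀ y ∈ s, ∀ α ∈ Icc (0 : ℝ) 1,
      f (α • x + (1 - α) • y) ≤ α * f x + (1 - α) * f y - (μ / 2) * α * (1 - α) * ‖x - y‖ ^ 2 := by
  simp only [UniformConvexOfDegreeOn, show (2 : ℝ) - 1 = 1 by norm_num, rpow_one, rpow_two,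
    add_sub_cancel, mul_one]

namespace UniformConvexOfDegreeOn

variable {s t : Set E} {ρ μ : ℝ} {f : E → ℝ}

theorem mono (hf : UniformConvexOfDegreeOn t ρ μ f) (hst : s ⊆ t) :
    UniformConvexOfDegreeOn s ρ μ f :=
  fun x hx y hy => hf x (hst hx) y (hst hy)

theorem const_mul (hf : UniformConvexOfDegreeOn s ρ μ f) {c : ℝ} (hc : 0 ≤ c) :
    UniformConvexOfDegreeOn s ρ (c * μ) (fun x => c * f x) := by
  intro x hx y hy α hα
  have := mul_le_mul_of_nonneg_left (hf x hx y hy α hα) hc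
  linarith

theorem linear_add (hf : UniformConvexOfDegreeOn s ρ μ f) (ℓ : E →L[ℝ] ℝ) :
    UniformConvexOfDegreeOn s ρ μ (fun x => ℓ x + f x) := by
  intro x hx y hy α hα
  have := hf x hx y hy α hα
  simp only [map_add, map_smul, smul_eq_mul]
  linarith

theorem comp_homothety (hf : UniformConvexOfDegreeOn t ρ μ f) (a : E) {c : ℝ} (hc : 0 < c) :
    UniformConvexOfDegreeOn ((fun x => c • (x - a)) ⁻¹' t) ρ (μ * c ^ ρ)
      (fun x => f (c • (x - a))) := by
  intro x hx y hy α hα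
  have key := hf _ hx _ hy α hα
  have harg : α • c • (x - a) + (1 - α) • c • (y - a) = c • (α • x + (1 - α) • y - a) := by
    module
  have hnorm : ‖c • (x - a) - c • (y - a)‖ ^ ρ = c ^ ρ * ‖x - y‖ ^ ρ := by
    rw [← smul_sub, sub_sub_sub_cancel_right, norm_smul, norm_of_nonneg hc.le,
      mul_rpow hc.le (norm_nonneg _)]
  rw [harg, hnorm] at key
  linarith

theorem convexOn (hf : UniformConvexOfDegreeOn s ρ μ f) (hs : Convex ℝ s) (hμ : 0 ≤ μ) :
    ConvexOn ℝ s f := by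
  refine ⟨hs, fun x hx y hy a b ha hb hab => ?_⟩
  obtain rfl : b = 1 - a := by linarith
  have := hf x hx y hy a ⟨ha, by linarith⟩
  have : 0 ≤ (μ / 2) * a * (1 - a) * (a ^ (ρ - 1) + (1 - a) ^ (ρ - 1)) * ‖x - y‖ ^ ρ := by
    have := rpow_nonneg ha (ρ - 1); have := rpow_nonneg hb (ρ - 1)
    have := rpow_nonneg (norm_nonneg (x - y)) ρ
    positivity
  simp only [smul_eq_mul]
  linarith

theorem add_mul_norm_rpow_le_of_isMinOn (hf : UniformConvexOfDegreeOn s ρ μ f)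
    (hs : Convex ℝ s) (hρ : 1 < ρ) {x y : E} (hx : x ∈ s) (hy : y ∈ s) (hmin : IsMinOn f s x) :
    f x + μ / 2 * ‖y - x‖ ^ ρ ≤ f y := by
  suffices μ / 2 * ‖y - x‖ ^ ρ ≤ f y - f x by linarith
  refine le_of_forall_weight_mul_le hρ fun α hα => ?_
  have hz : α • y + (1 - α) • x ∈ s := hs hy hx hα.1.le (by linarith [hα.2]) (by ring)
  have hle := (isMinOn_iff.mp hmin _ hz).trans (hf y hy x hx α (Ioo_subset_Icc_self hα))
  have key : α * ((1 - α) * (α ^ (ρ - 1) + (1 - α) ^ (ρ - 1)) * (μ / 2 * ‖y - x‖ ^ ρ)) ≤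
      α * (f y - f x) := by linarith
  exact le_of_mul_le_mul_left key hα.1

theorem add_le_of_forall_add_le (hf : UniformConvexOfDegreeOn s ρ μ f)
    (hs : Convex ℝ s) (hρ : 1 < ρ) {x y : E} (hx : x ∈ s) (hy : y ∈ s) {g : E →L[ℝ] ℝ}
    (hg : ∀ z ∈ s, f x + g (z - x) ≤ f z) :
    f x + g (y - x) + μ / 2 * ‖y - x‖ ^ ρ ≤ f y := by
  have hmin : IsMinOn (fun z => (-g) z + f z) s x := isMinOn_iff.mpr fun z hz => by
    have := hg z hz
    simp only [neg_apply, map_sub] at this ⊢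
    linarith
  have := (hf.linear_add (-g)).add_mul_norm_rpow_le_of_isMinOn hs hρ hx hy hmin
  simp only [neg_apply, map_sub] at this ⊢
  linarith

theorem add_half_le_of_isMinOn_closedBall [Nontrivial E] {A : ℝ}
    (hf : UniformConvexOfDegreeOn (Metric.closedBall (0 : E) 1) ρ μ f) (hρ : 1 < ρ)
    (hmin : IsMinOn f (Metric.closedBall 0 1) 0) (hA : ∀ x ∈ Metric.closedBall (0 : E) 1, f x ≤ A) :
    f 0 + μ / 2 ≤ A := by
  obtain ⟨u, hu⟩ := exists_norm_eq E zero_le_one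
  have hu_mem : u ∈ Metric.closedBall (0 : E) 1 := by simp [hu]
  have := hf.add_mul_norm_rpow_le_of_isMinOn (convex_closedBall 0 1) hρ
    (Metric.mem_closedBall_self zero_le_one) hu_mem hmin
  rw [sub_zero, hu, one_rpow, mul_one] at this
  linarith [hA u hu_mem]

end UniformConvexOfDegreeOn

theorem convexOn_norm_sub_rpow {s : Set E} (hs : Convex ℝ s) {ρ : ℝ} (hρ : 1 ≤ ρ) (a : E) :
    ConvexOn ℝ s fun x => ‖x - a‖ ^ ρ := by
  refine ⟨hs, fun x _ y _ α β hα hβ hαβ => ?_⟩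
  have htri : ‖α • x + β • y - a‖ ≤ α * ‖x - a‖ + β * ‖y - a‖ := by
    have : α • x + β • y - a = α • (x - a) + β • (y - a) := by
      rw [smul_sub, smul_sub, sub_add_sub_comm, ← add_smul, hαβ, one_smul]
    rw [this]
    exact (convexOn_norm convex_univ).2 trivial trivial hα hβ hαβ
  calc ‖α • x + β • y - a‖ ^ ρ ≤ (α * ‖x - a‖ + β * ‖y - a‖) ^ ρ :=
        rpow_le_rpow (norm_nonneg _) htri (by linarith)
    _ ≤ α • ‖x - a‖ ^ ρ + β • ‖y - a‖ ^ ρ :=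
        (convexOn_rpow hρ).2 (norm_nonneg _) (norm_nonneg _) hα hβ hαβ

noncomputable def uniformAverage (x : ℕ → E) (n : ℕ) : E :=
  (1 / ((n : ℝ) + 1)) • ∑ i ∈ range (n + 1), x i

theorem uniformAverage_eq_sum (x : ℕ → E) (n : ℕ) :
    uniformAverage x n = ∑ i ∈ range (n + 1), (1 / ((n : ℝ) + 1)) • x i :=
  Finset.smul_sum

theorem sum_range_succ_uniform_weight (n : ℕ) : ∑ _i ∈ range (n + 1), 1 / ((n : ℝ) + 1) = 1 := by
  rw [sum_const, card_range, nsmul_eq_mul]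
  push_cast
  field_simp

theorem Convex.uniformAverage_mem {s : Set E} (hs : Convex ℝ s) {x : ℕ → E} (hx : ∀ i, x i ∈ s)
    (n : ℕ) : uniformAverage x n ∈ s := by
  rw [uniformAverage_eq_sum]
  exact hs.sum_mem (fun i _ => by positivity) (sum_range_succ_uniform_weight n) fun i _ => hx i

theorem ConvexOn.map_uniformAverage_le {s : Set E} {φ : E → ℝ} (hφ : ConvexOn ℝ s φ)
    {x : ℕ → E} (hx : ∀ i, x i ∈ s) {n : ℕ} {b : ℝ}
    (hb : ∑ i ∈ range (n + 1), φ (x i) ≤ (n + 1) * b) : φ (uniformAverage x n) ≤ b := by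
  have hjensen : φ (uniformAverage x n) ≤ ∑ i ∈ range (n + 1), (1 / ((n : ℝ) + 1)) • φ (x i) := by
    rw [uniformAverage_eq_sum]
    exact hφ.map_sum_le (fun i _ => by positivity) (sum_range_succ_uniform_weight n)
      fun i _ => hx i
  rw [← Finset.smul_sum, smul_eq_mul, div_mul_eq_mul_div, one_mul,
    le_div_iff₀ (by positivity)] at hjensen
  exact le_of_mul_le_mul_right (hjensen.trans (hb.trans_eq (mul_comm _ _))) (by positivity)

theorem UniformConvexOfDegreeOn.uniformAverage_bounds {s : Set E} {ρ μ : ℝ} {f : E → ℝ}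
    (hf : UniformConvexOfDegreeOn s ρ μ f) (hs : Convex ℝ s) (hρ : 1 < ρ) (hμ : 0 ≤ μ)
    {x : ℕ → E} (hx : ∀ i, x i ∈ s) {g : ℕ → E →L[ℝ] ℝ}
    (hg : ∀ i, ∀ z ∈ s, f (x i) + g i (z - x i) ≤ f z)
    {xstar : E} (hxstar : xstar ∈ s) (hmin : IsMinOn f s xstar) {n : ℕ} {B : ℝ}
    (hregret : ∑ i ∈ range (n + 1), g i (x i - xstar) ≤ (n + 1) * B) :
    f (uniformAverage x n) - f xstar ≤ B ∧ μ * ‖uniformAverage x n - xstar‖ ^ ρ ≤ B := by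
  have hconv : ConvexOn ℝ s fun z => f z + μ / 2 * ‖z - xstar‖ ^ ρ :=
    (hf.convexOn hs hμ).add ((convexOn_norm_sub_rpow hs hρ.le xstar).smul (by positivity))
  have hstep : ∀ i, f (x i) + μ / 2 * ‖x i - xstar‖ ^ ρ ≤ f xstar + g i (x i - xstar) := by
    intro i
    have := hf.add_le_of_forall_add_le hs hρ (hx i) hxstar (hg i)
    rw [norm_sub_rev, ← neg_sub, map_neg] at this
    linarith
  have hsum : ∑ i ∈ range (n + 1), (f (x i) + μ / 2 * ‖x i - xstar‖ ^ ρ) ≤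
      (n + 1) * (f xstar + B) := by
    refine (sum_le_sum fun i _ => hstep i).trans ?_
    rw [sum_add_distrib, sum_const, card_range, nsmul_eq_mul]
    push_cast
    linarith
  have havg := hconv.map_uniformAverage_le hx hsum
  have hgrowth := hf.add_mul_norm_rpow_le_of_isMinOn hs hρ hxstar (hs.uniformAverage_mem hx n) hmin
  have hnonneg : 0 ≤ μ / 2 * ‖uniformAverage x n - xstar‖ ^ ρ := by
    have := rpow_nonneg (norm_nonneg (uniformAverage x n - xstar)) ρ
    positivity
  constructor <;> linarith

/-- With `ψ y = d ((1 / R) • (y - x̄))`, the dual averaging iterate `x n` minimizes this over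
`Q_R(x̄)`: it is `-(⟨-s_n, y - x̄⟩ - β ψ y)` up to the constant `s_n x̄`. -/
def dualAveragingObjective (g : ℕ → E →L[ℝ] ℝ) (β : ℝ) (ψ : E → ℝ) (n : ℕ) (y : E) : ℝ :=
  (∑ i ∈ range n, g i) y + β * ψ y

section DualAveraging

variable {C : Set E} {ψ : E → ℝ} {κ β L : ℝ} {x : ℕ → E} {g : ℕ → E →L[ℝ] ℝ}

theorem dualAveragingObjective_succ (n : ℕ) (y : E) :
    dualAveragingObjective g β ψ (n + 1) y = dualAveragingObjective g β ψ n y + g n y := by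
  simp only [dualAveragingObjective, sum_range_succ, add_apply]
  ring

theorem dualAveragingObjective_le_succ (hC : Convex ℝ C)
    (hψ : UniformConvexOfDegreeOn C 2 κ ψ) (hκ : 0 < κ) (hβ : 0 < β) (hxC : ∀ n, x n ∈ C)
    (hmin : ∀ n, IsMinOn (dualAveragingObjective g β ψ n) C (x n)) {n : ℕ} (hg : ‖g n‖ ≤ L) :
    dualAveragingObjective g β ψ n (x n) + g n (x n) - L ^ 2 / (2 * (β * κ)) ≤
      dualAveragingObjective g β ψ (n + 1) (x (n + 1)) := by
  set Δ := x (n + 1) - x n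
  have hobj := (hψ.const_mul hβ.le).linear_add (∑ i ∈ range n, g i)
  have hgrowth := hobj.add_mul_norm_rpow_le_of_isMinOn hC one_lt_two (hxC n) (hxC (n + 1)) (hmin n)
  rw [rpow_two] at hgrowth
  have hdual : -(L * ‖Δ‖) ≤ g n Δ := by
    have := ((g n).le_opNorm Δ).trans (mul_le_mul_of_nonneg_right hg (norm_nonneg Δ))
    rw [Real.norm_eq_abs] at this
    exact (abs_le.mp this).1
  have hyoung : L * ‖Δ‖ - β * κ / 2 * ‖Δ‖ ^ 2 ≤ L ^ 2 / (2 * (β * κ)) := by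
    rw [le_div_iff₀ (by positivity)]
    nlinarith [sq_nonneg (β * κ * ‖Δ‖ - L)]
  have hsplit : g n (x (n + 1)) = g n (x n) + g n Δ := by rw [← map_add, add_sub_cancel]
  rw [dualAveragingObjective_succ, hsplit]
  simp only [dualAveragingObjective] at hgrowth ⊢
  linarith

theorem dualAveraging_regret_le_s2 (hC : Convex ℝ C)
    (hψ : UniformConvexOfDegreeOn C 2 κ ψ) (hκ : 0 < κ) (hβ : 0 < β) (hxC : ∀ n, x n ∈ C)
    (hmin : ∀ n, IsMinOn (dualAveragingObjective g β ψ n) C (x n)) (hg : ∀ n, ‖g n‖ ≤ L)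
    (n : ℕ) {y : E} (hy : y ∈ C) :
    ∑ i ∈ range n, g i (x i - y) ≤ β * (ψ y - ψ (x 0)) + n * (L ^ 2 / (2 * (β * κ))) := by
  have hvalue : ∀ n, β * ψ (x 0) + ∑ i ∈ range n, g i (x i) - n * (L ^ 2 / (2 * (β * κ))) ≤
      dualAveragingObjective g β ψ n (x n) := by
    intro n
    induction n with
    | zero => simp [dualAveragingObjective]
    | succ m ih =>
      have := dualAveragingObjective_le_succ hC hψ hκ hβ hxC hmin (hg m)
      rw [sum_range_succ]
      push_cast
      linarith
  have hupper := isMinOn_iff.mp (hmin n) y hy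
  simp only [dualAveragingObjective, _root_.sum_apply] at hupper hvalue
  simp only [map_sub, sum_sub_distrib]
  linarith [hvalue n]

theorem isMinOn_dualAveragingObjective {s : ℕ → E →L[ℝ] ℝ} {n : ℕ} {a y₀ : E}
    (hs : s n = ∑ i ∈ range n, g i)
    (hmax : ∀ y ∈ C, (-(s n)) (y - a) - β * ψ y ≤ (-(s n)) (y₀ - a) - β * ψ y₀) :
    IsMinOn (dualAveragingObjective g β ψ n) C y₀ :=
  isMinOn_iff.mpr fun y hy => by
    have := hmax y hy
    simp only [dualAveragingObjective, ← hs, neg_apply, map_sub] at this ⊢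
    linarith

theorem dualAveraging_regret_le_of_prox {Q : Set E} (hQ : Convex ℝ Q) {d : E → ℝ} {μd A : ℝ}
    (hμd : 0 < μd) (hd : UniformConvexOfDegreeOn (Metric.closedBall 0 1) 2 μd d)
    (hd0 : d 0 = 0) (hdmin : IsMinOn d (Metric.closedBall 0 1) 0)
    (hdA : ∀ z ∈ Metric.closedBall (0 : E) 1, d z ≤ A) {a : E} {R : ℝ} (hR : 0 < R)
    (hβ : 0 < β) {s : ℕ → E →L[ℝ] ℝ} (hx0 : x 0 = a) (hs0 : s 0 = 0)
    (hsrec : ∀ i, s (i + 1) = s i + g i) (hxC : ∀ n, x n ∈ Q ∩ Metric.closedBall a R)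
    (hxmax : ∀ i, ∀ y ∈ Q ∩ Metric.closedBall a R,
      (-(s (i + 1))) (y - a) - β * d ((1 / R) • (y - a)) ≤
        (-(s (i + 1))) (x (i + 1) - a) - β * d ((1 / R) • (x (i + 1) - a)))
    (hg : ∀ n, ‖g n‖ ≤ L) (n : ℕ) {y : E} (hy : y ∈ Q ∩ Metric.closedBall a R) :
    ∑ i ∈ range n, g i (x i - y) ≤ β * A + n * (L ^ 2 / (2 * (β * (μd / R ^ 2)))) := by
  set C := Q ∩ Metric.closedBall a R
  set ψ : E → ℝ := fun y => d ((1 / R) • (y - a))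
  have hC_ball : ∀ y ∈ C, (1 / R) • (y - a) ∈ Metric.closedBall (0 : E) 1 := fun y hy => by
    rw [mem_closedBall_zero_iff, norm_smul, norm_of_nonneg (by positivity), one_div_mul_eq_div,
      div_le_one hR, ← dist_eq_norm]
    exact hy.2
  have hψ : UniformConvexOfDegreeOn C 2 (μd / R ^ 2) ψ := by
    convert (hd.comp_homothety a (one_div_pos.mpr hR)).mono hC_ball using 1
    rw [rpow_two]; ring
  have hs : ∀ n, s n = ∑ i ∈ range n, g i := by
    intro n
    induction n with
    | zero => simpa using hs0
    | succ m ih => rw [hsrec m, ih, sum_range_succ]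
  have hmin : ∀ n, IsMinOn (dualAveragingObjective g β ψ n) C (x n) := by
    rintro (_ | n) <;> refine isMinOn_dualAveragingObjective (a := a) (hs _) fun y hy => ?_
    · have := mul_le_mul_of_nonneg_left (isMinOn_iff.mp hdmin _ (hC_ball y hy)) hβ.le
      simp only [hs0, hx0, ψ, sub_self, smul_zero, neg_zero, zero_apply]
      linarith
    · exact hxmax n y hy
  have hregret := dualAveraging_regret_le_s2 (hQ.inter (convex_closedBall a R)) hψ (by positivity) hβ
    hxC hmin hg n hy
  have hψA := mul_le_mul_of_nonneg_left (hdA _ (hC_ball y hy)) hβ.le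
  simp only [ψ, hx0, sub_self, smul_zero, hd0, sub_zero] at hregret hψA
  linarith

end DualAveraging

theorem dualAveraging_tuned_bound_eq {L R μ A n : ℝ} (hL : 0 < L) (hR : 0 < R) (hμ : 0 < μ)
    (hA : 0 < A) (hn : 0 < n) :
    L * R / √(2 * μ * A) * √n * A + n * (L ^ 2 / (2 * (L * R / √(2 * μ * A) * √n * (μ / R ^ 2))))
      = n * (L * R * √(2 * A / (μ * n))) := by
  set β := L * R / √(2 * μ * A) * √n with hβ
  set c := √(2 * A / (μ * n)) with hc
  -- `β μ c = L R` and `μ n c² = 2 A`: both terms equal `n L R c / 2`.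
  have hc_sq : μ * n * c ^ 2 = 2 * A := by
    rw [hc, sq_sqrt (by positivity)]; field_simp
  have hβc : β * μ * c = L * R := by
    have hsq : (β * μ * c) ^ 2 = (L * R) ^ 2 := by
      rw [mul_pow, mul_pow, hβ, hc, sq_sqrt (by positivity), mul_pow, div_pow,
        sq_sqrt (by positivity), sq_sqrt hn.le]
      field_simp
    exact (pow_left_inj₀ (by positivity) (by positivity) two_ne_zero).mp hsq
  rw [show A = μ * n * c ^ 2 / 2 by linarith, show L = β * μ * c / R by field_simp; linarith]
  field_simp
  ring

end

theorem dual_averaging_uniformly_convex_tuned_general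
    {E : Type*} [NormedAddCommGroup E] [NormedSpace ℝ E]
    (Q : Set E) (hQconv : Convex ℝ Q)
    (d : E → ℝ) (μd A : ℝ) (hμd : 0 < μd)
    (hd_sc : ∀ x ∈ Metric.closedBall (0 : E) 1, ∀ y ∈ Metric.closedBall (0 : E) 1,
      ∀ α ∈ Set.Icc (0 : ℝ) 1,
      d (α • x + (1 - α) • y) ≤
        α * d x + (1 - α) * d y - (μd / 2) * α * (1 - α) * ‖x - y‖ ^ 2)
    (hd0 : d 0 = 0)
    (hd_nonneg : ∀ x ∈ Metric.closedBall (0 : E) 1, 0 ≤ d x)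
    (hdA : ∀ x ∈ Metric.closedBall (0 : E) 1, d x ≤ A)
    (f : E → ℝ) (ρ μf : ℝ) (hρ : 2 ≤ ρ) (hμf : 0 < μf)
    (huc : ∀ x ∈ Q, ∀ y ∈ Q, ∀ α ∈ Set.Icc (0 : ℝ) 1,
      f (α • x + (1 - α) • y) ≤
        α * f x + (1 - α) * f y -
          (μf / 2) * α * (1 - α) * (α ^ (ρ - 1) + (1 - α) ^ (ρ - 1)) * ‖x - y‖ ^ ρ)
    (L : ℝ) (hLpos : 0 < L)
    (hL : ∀ x ∈ Q, ∀ g : E →L[ℝ] ℝ, (∀ y ∈ Q, f x + g (y - x) ≤ f y) → ‖g‖ ≤ L)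
    (xbar : E) (hxbar : xbar ∈ Q) (R : ℝ) (hR : 0 < R)
    (xstar : E) (hxstarQ : xstar ∈ Q ∩ Metric.closedBall xbar R)
    (hxstar : ∀ y ∈ Q ∩ Metric.closedBall xbar R, f xstar ≤ f y)
    (N : ℕ) (γ : ℝ) (hγ : γ = L * R / Real.sqrt (2 * μd * A))
    (β : ℕ → ℝ) (hβ : ∀ i, β i = γ * Real.sqrt ((N : ℝ) + 1))
    (xs : ℕ → E) (g : ℕ → E →L[ℝ] ℝ) (s : ℕ → E →L[ℝ] ℝ)
    (hx0 : xs 0 = xbar) (hs0 : s 0 = 0)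
    (hsub : ∀ i, ∀ y ∈ Q, f (xs i) + (g i) (y - xs i) ≤ f y)
    (hsrec : ∀ i, s (i + 1) = s i + g i)
    (hxrec : ∀ i, xs (i + 1) ∈ Q ∩ Metric.closedBall xbar R ∧
      ∀ y ∈ Q ∩ Metric.closedBall xbar R,
        (-(s (i + 1))) (y - xbar) - β (i + 1) * d ((1 / R) • (y - xbar)) ≤
          (-(s (i + 1))) (xs (i + 1) - xbar)
            - β (i + 1) * d ((1 / R) • (xs (i + 1) - xbar)))
    (xN : E) (hxN : xN = (1 / ((N : ℝ) + 1)) • ∑ i ∈ Finset.range (N + 1), xs i) :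
    f xN - f xstar ≤ L * R * Real.sqrt (2 * A / (μd * ((N : ℝ) + 1))) ∧
    ‖xN - xstar‖ ^ ρ ≤ (L * R / μf) * Real.sqrt (2 * A / (μd * ((N : ℝ) + 1))) := by
  -- In the zero space `A` may vanish, and then `γ = L R / 0 = 0`; but there `xN = xstar`.
  rcases subsingleton_or_nontrivial E with hE | hE
  · rw [Subsingleton.elim xN xstar, sub_self, sub_self, norm_zero, zero_rpow (by linarith)]
    constructor <;> positivity
  subst hγ
  have hd := uniformConvexOfDegreeOn_two_iff.mpr hd_sc
  have hdmin : IsMinOn d (Metric.closedBall 0 1) 0 :=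
    isMinOn_iff.mpr fun x hx => hd0 ▸ hd_nonneg x hx
  have hA : 0 < A := by linarith [hd.add_half_le_of_isMinOn_closedBall one_lt_two hdmin hdA]
  have hxC : ∀ n, xs n ∈ Q ∩ Metric.closedBall xbar R := by
    rintro (_ | n)
    · rw [hx0]; exact ⟨hxbar, Metric.mem_closedBall_self hR.le⟩
    · exact (hxrec n).1
  have hregret := dualAveraging_regret_le_of_prox hQconv hμd hd hd0 hdmin hdA hR
    (β := L * R / √(2 * μd * A) * √((N : ℝ) + 1)) (by positivity) hx0 hs0 hsrec hxC
    (fun i => by simpa only [hβ] using (hxrec i).2) (fun n => hL _ (hxC n).1 _ (hsub n))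
    (N + 1) hxstarQ
  push_cast at hregret
  rw [dualAveraging_tuned_bound_eq hLpos hR hμd hA (by positivity)] at hregret
  have hf : UniformConvexOfDegreeOn (Q ∩ Metric.closedBall xbar R) ρ μf f :=
    UniformConvexOfDegreeOn.mono huc inter_subset_left
  obtain ⟨hgap, hdist⟩ := hf.uniformAverage_bounds (hQconv.inter (convex_closedBall xbar R))
    (by linarith) hμf.le hxC (fun i z hz => hsub i z hz.1) hxstarQ (isMinOn_iff.mpr hxstar) hregret
  rw [show xN = uniformAverage xs N from hxN]
  exact ⟨hgap, by rw [div_mul_eq_mul_div, le_div_iff₀ hμf]; linarith⟩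

/-- Corollary 3.1. Dual averaging with unit stepsizes and
gain `β i = γ √(N+1)`, `γ = L R / √(2 μ(d) A(d))`, applied to a uniformly convex
function with parameters `ρ ≥ 2`, `μf > 0` and subgradients bounded by `L > 0`. -/
theorem dual_averaging_uniformly_convex_tuned
    {E : Type*} [NormedAddCommGroup E] [NormedSpace ℝ E] [FiniteDimensional ℝ E]
    (Q : Set E) (hQc : IsClosed Q) (hQconv : Convex ℝ Q)
    (d : E → ℝ) (μd A : ℝ) (hμd : 0 < μd)
    (hd_cont : ContinuousOn d (Metric.closedBall (0 : E) 1))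
    (hd_sc : ∀ x ∈ Metric.closedBall (0 : E) 1, ∀ y ∈ Metric.closedBall (0 : E) 1,
      ∀ α ∈ Set.Icc (0 : ℝ) 1,
      d (α • x + (1 - α) • y) ≤
        α * d x + (1 - α) * d y - (μd / 2) * α * (1 - α) * ‖x - y‖ ^ 2)
    (hd0 : d 0 = 0)
    (hd_nonneg : ∀ x ∈ Metric.closedBall (0 : E) 1, 0 ≤ d x)
    (hdA : ∀ x ∈ Metric.closedBall (0 : E) 1, d x ≤ A)
    (f : E → ℝ) (ρ μf : ℝ) (hρ : 2 ≤ ρ) (hμf : 0 < μf)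
    (huc : ∀ x ∈ Q, ∀ y ∈ Q, ∀ α ∈ Set.Icc (0 : ℝ) 1,
      f (α • x + (1 - α) • y) ≤
        α * f x + (1 - α) * f y -
          (μf / 2) * α * (1 - α) * (α ^ (ρ - 1) + (1 - α) ^ (ρ - 1)) * ‖x - y‖ ^ ρ)
    (L : ℝ) (hLpos : 0 < L)
    (hL : ∀ x ∈ Q, ∀ g : E →L[ℝ] ℝ, (∀ y ∈ Q, f x + g (y - x) ≤ f y) → ‖g‖ ≤ L)
    (xbar : E) (hxbar : xbar ∈ Q) (R : ℝ) (hR : 0 < R)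
    (xstar : E) (hxstarQ : xstar ∈ Q ∩ Metric.closedBall xbar R)
    (hxstar : ∀ y ∈ Q ∩ Metric.closedBall xbar R, f xstar ≤ f y)
    (N : ℕ) (γ : ℝ) (hγ : γ = L * R / Real.sqrt (2 * μd * A))
    (β : ℕ → ℝ) (hβ : ∀ i, β i = γ * Real.sqrt ((N : ℝ) + 1))
    (xs : ℕ → E) (g : ℕ → E →L[ℝ] ℝ) (s : ℕ → E →L[ℝ] ℝ)
    (hx0 : xs 0 = xbar) (hs0 : s 0 = 0)
    (hsub : ∀ i, ∀ y ∈ Q, f (xs i) + (g i) (y - xs i) ≤ f y)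
    (hsrec : ∀ i, s (i + 1) = s i + g i)
    (hxrec : ∀ i, xs (i + 1) ∈ Q ∩ Metric.closedBall xbar R ∧
      ∀ y ∈ Q ∩ Metric.closedBall xbar R,
        (-(s (i + 1))) (y - xbar) - β (i + 1) * d ((1 / R) • (y - xbar)) ≤
          (-(s (i + 1))) (xs (i + 1) - xbar)
            - β (i + 1) * d ((1 / R) • (xs (i + 1) - xbar)))
    (xN : E) (hxN : xN = (1 / ((N : ℝ) + 1)) • ∑ i ∈ Finset.range (N + 1), xs i) :
    f xN - f xstar ≤ L * R * Real.sqrt (2 * A / (μd * ((N : ℝ) + 1))) ∧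
    ‖xN - xstar‖ ^ ρ ≤ (L * R / μf) * Real.sqrt (2 * A / (μd * ((N : ℝ) + 1))) :=
  dual_averaging_uniformly_convex_tuned_general Q hQconv d μd A hμd hd_sc hd0 hd_nonneg hdA f ρ μf
    hρ hμf huc L hLpos hL xbar hxbar R hR xstar hxstarQ hxstar N γ hγ β hβ xs g s hx0 hs0 hsub hsrec
    hxrec xN hxN
end

section
/- (Theorem 3.1, multi-stage method.) Let f be uniformly convex on Q with parameters ρ ≥ 2 and μ(f) > 0, with subgradients bounded by L > 0 in dual norm; let x* minimize f over Q, f* = f(x*), and let y₀ ∈ Q with ‖y₀ − x*‖ ≤ R₀. Fix ε > 0, set τ = 2(ρ−1)/ρ and R_k = (2^{−k} R₀^ρ)^{1/ρ}. Let m ≥ 1 and nonnegative integers N₁,…,N_m satisfy N_k + 1 ≥ 2^{τk}·4L²A(d)/(μ(f)² μ(d) R₀^{2(ρ−1)}) ≥ N_k for each k, and 2^m ≥ μ(f)R₀^ρ/ε ≥ 2^{m−1}. Suppose y₁,…,y_m ∈ Q and reals δ₁,…,δ_m ≥ 0 (the gap values of the successive dual-averaging stages) satisfy, for each k = 1,…,m: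 δ_k ≤ L R_{k−1} √(2A(d)/(μ(d)(N_k+1))), and whenever ‖y_{k−1} − x*‖ ≤ R_{k−1}: f(y_k) − f(x*) ≤ δ_k and μ(f)‖y_k − x*‖^ρ ≤ δ_k. Then: (i) ‖y_k − x*‖^ρ ≤ 2^{−k} R₀^ρ for k = 0,…,m; (ii) δ_k ≤ μ(f) 2^{−k} R₀^ρ for k = 1,…,m; (iii) f(y_m) − f* ≤ ε; (iv) Σ_{k=1}^{m} N_k ≤ 4^{τ+1} L² A(d) / (μ(f)^{2/ρ} μ(d)) · ε^{−τ}. -/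
/-!
A dual-averaging stage started within `R_{k-1}` of `x*` has gap at most
`L R_{k-1} √(2A / (μ(d) (N_k + 1)))`, and the lower bound on `N_k` makes this at most
`μ(f) 2^{-k} R₀^ρ`. Uniform convexity turns that gap into `‖y_k - x*‖^ρ ≤ 2^{-k} R₀^ρ`, i.e.
`‖y_k - x*‖ ≤ R_k`, so localization propagates from stage to stage. After `m` stages the gap is
`μ(f) 2^{-m} R₀^ρ ≤ ε`. The stage lengths grow geometrically with ratio `2^τ ≥ 2`, so their sum is
at most twice the last one, which `2^m ≤ 2 μ(f) R₀^ρ / ε` bounds by a multiple of `ε^{-τ}`.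
-/

open Real

lemma one_le_two_mul_sub_one_div {ρ : ℝ} (hρ : 2 ≤ ρ) : 1 ≤ 2 * (ρ - 1) / ρ := by
  rw [le_div_iff₀ (by linarith)]
  linarith

lemma rpow_neg_natCast_sub_one {b : ℝ} (hb : 0 < b) {k : ℕ} (hk : 1 ≤ k) :
    b ^ (-((k - 1 : ℕ) : ℝ)) = b * b ^ (-(k : ℝ)) := by
  rw [Nat.cast_sub hk, neg_sub, rpow_sub hb, rpow_neg hb.le]
  simp [div_eq_mul_inv]

lemma rpow_mul_rpow_neg_natCast {ρ τ R0 : ℝ} (hρ : 0 < ρ) (hτ : τ = 2 * (ρ - 1) / ρ)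
    (hR0 : 0 < R0) (k : ℕ) :
    ((2 : ℝ) ^ (-(k : ℝ)) * R0 ^ ρ) ^ τ * 2 ^ (τ * k) = R0 ^ (2 * (ρ - 1)) := by
  rw [mul_rpow (by positivity) (by positivity), ← rpow_mul zero_le_two, ← rpow_mul hR0.le,
    mul_right_comm, ← rpow_add two_pos, hτ]
  field_simp
  simp

lemma sum_Icc_pow_le_two_mul_pow {q : ℝ} (hq : 2 ≤ q) (n : ℕ) :
    ∑ k ∈ Finset.Icc 1 n, q ^ k ≤ 2 * q ^ n := by
  induction n with
  | zero => simp
  | succ n ih =>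
    rw [Finset.sum_Icc_succ_top (by omega), pow_succ]
    have : 0 ≤ q ^ n := by positivity
    nlinarith

/-- With `P = R_k^ρ` the stage radius is `R_{k-1} = (2P)^{1/ρ}`. Squaring, the bound reduces to
`2^{2/ρ} P^{2/ρ + τ} ≤ 2 P²`, which holds since `2/ρ + τ = 2` and `ρ ≥ 2`. -/
lemma dualAveraging_gap_le {ρ τ μf μd L A P n : ℝ} (hρ : 2 ≤ ρ) (hτ : τ = 2 * (ρ - 1) / ρ)
    (hμf : 0 < μf) (hμd : 0 < μd) (hL : 0 < L) (hA : 0 < A) (hP : 0 < P)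
    (hn : 4 * L ^ 2 * A / (μf ^ 2 * μd * P ^ τ) ≤ n) :
    L * (2 * P) ^ (1 / ρ) * √(2 * A / (μd * n)) ≤ μf * P := by
  have hρ0 : 0 < ρ := by linarith
  have hμdn : 4 * L ^ 2 * A / (μf ^ 2 * P ^ τ) ≤ μd * n := by
    rw [div_le_iff₀ (by positivity)] at hn ⊢
    nlinarith
  have hs : 2 * A / (μd * n) ≤ μf ^ 2 * P ^ τ / (2 * L ^ 2) := by
    calc 2 * A / (μd * n) ≤ 2 * A / (4 * L ^ 2 * A / (μf ^ 2 * P ^ τ)) := by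
          gcongr
      _ = μf ^ 2 * P ^ τ / (2 * L ^ 2) := by field_simp; ring
  have hr : ((2 * P) ^ (1 / ρ)) ^ 2 = 2 ^ (2 / ρ) * P ^ (2 / ρ) := by
    rw [← rpow_natCast, ← rpow_mul (by positivity), mul_rpow zero_le_two hP.le]
    norm_num [div_eq_mul_inv, mul_comm]
  have hPτ : P ^ (2 / ρ) * P ^ τ = P ^ 2 := by
    rw [← rpow_add hP, hτ, ← rpow_natCast]
    congr 1
    field_simp
    push_cast
    ring
  have h2 : (2 : ℝ) ^ (2 / ρ) ≤ 2 := rpow_le_self_of_one_le one_le_two ((div_le_one hρ0).2 hρ)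
  rw [← sqrt_sq (by positivity : 0 ≤ L * (2 * P) ^ (1 / ρ)), ← sqrt_mul (by positivity),
    sqrt_le_left (by positivity)]
  calc (L * (2 * P) ^ (1 / ρ)) ^ 2 * (2 * A / (μd * n))
      ≤ (L * (2 * P) ^ (1 / ρ)) ^ 2 * (μf ^ 2 * P ^ τ / (2 * L ^ 2)) := by gcongr
    _ = 2 ^ (2 / ρ) / 2 * (μf ^ 2 * (P ^ (2 / ρ) * P ^ τ)) := by
        rw [mul_pow, hr]; field_simp
    _ ≤ (μf * P) ^ 2 := by
        rw [hPτ, mul_pow]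
        have : 0 ≤ μf ^ 2 * P ^ 2 := by positivity
        nlinarith

lemma dualAveraging_gap_le_of_stage {ρ τ μf μd L A R0 n : ℝ} {k : ℕ} (hρ : 2 ≤ ρ)
    (hτ : τ = 2 * (ρ - 1) / ρ) (hμf : 0 < μf) (hμd : 0 < μd) (hL : 0 < L) (hA : 0 < A)
    (hR0 : 0 < R0) (hk : 1 ≤ k)
    (hn : 2 ^ (τ * k) * (4 * L ^ 2 * A) / (μf ^ 2 * μd * R0 ^ (2 * (ρ - 1))) ≤ n) :
    L * ((2 : ℝ) ^ (-((k - 1 : ℕ) : ℝ)) * R0 ^ ρ) ^ (1 / ρ) * √(2 * A / (μd * n)) ≤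
      μf * (2 ^ (-(k : ℝ)) * R0 ^ ρ) := by
  rw [rpow_neg_natCast_sub_one two_pos hk, mul_assoc (2 : ℝ)]
  refine dualAveraging_gap_le (P := 2 ^ (-(k : ℝ)) * R0 ^ ρ) hρ hτ hμf hμd hL hA (by positivity)
    ((le_of_eq ?_).trans hn)
  rw [← rpow_mul_rpow_neg_natCast (by linarith) hτ hR0 k]
  have : (0 : ℝ) < 2 ^ (τ * k) := by positivity
  field_simp

lemma norm_sub_rpow_le_of_stages {E : Type*} [SeminormedAddCommGroup E] {y : ℕ → E} {x : E}
    {ρ μf : ℝ} {P δ : ℕ → ℝ} {m : ℕ} (hρ : 0 < ρ) (hμf : 0 < μf) (hP : ∀ k, 0 ≤ P k)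
    (hy0 : ‖y 0 - x‖ ^ ρ ≤ P 0) (hδ : ∀ k ∈ Finset.Icc 1 m, δ k ≤ μf * P k)
    (hstage : ∀ k ∈ Finset.Icc 1 m,
      ‖y (k - 1) - x‖ ≤ P (k - 1) ^ (1 / ρ) → μf * ‖y k - x‖ ^ ρ ≤ δ k) :
    ∀ k ≤ m, ‖y k - x‖ ^ ρ ≤ P k := by
  intro k hkm
  induction k with
  | zero => exact hy0
  | succ k ih =>
    have hk : k + 1 ∈ Finset.Icc 1 m := Finset.mem_Icc.2 ⟨by omega, hkm⟩
    have hloc : ‖y k - x‖ ≤ P k ^ (1 / ρ) := by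
      rw [one_div, le_rpow_inv_iff_of_pos (norm_nonneg _) (hP k) hρ]
      exact ih (by omega)
    exact le_of_mul_le_mul_left ((hstage _ hk hloc).trans (hδ _ hk)) hμf

lemma sum_Icc_le_two_mul_rpow {τ C : ℝ} {a : ℕ → ℝ} {m : ℕ} (hτ : 1 ≤ τ) (hC : 0 ≤ C)
    (ha : ∀ k ∈ Finset.Icc 1 m, a k ≤ 2 ^ (τ * k) * C) :
    ∑ k ∈ Finset.Icc 1 m, a k ≤ 2 * ((2 : ℝ) ^ m) ^ τ * C := by
  calc ∑ k ∈ Finset.Icc 1 m, a k ≤ (∑ k ∈ Finset.Icc 1 m, ((2 : ℝ) ^ τ) ^ k) * C := by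
        rw [Finset.sum_mul]
        refine Finset.sum_le_sum fun k hk => ?_
        rw [← rpow_natCast, ← rpow_mul zero_le_two]
        exact ha k hk
    _ ≤ 2 * ((2 : ℝ) ^ τ) ^ m * C := by
        gcongr
        exact sum_Icc_pow_le_two_mul_pow (self_le_rpow_of_one_le one_le_two hτ) m
    _ = 2 * ((2 : ℝ) ^ m) ^ τ * C := by
        rw [← rpow_natCast, ← rpow_natCast 2 m, ← rpow_mul zero_le_two, ← rpow_mul zero_le_two,
          mul_comm τ]

lemma two_mul_rpow_mul_le_four_rpow {ρ τ μf μd L A R0 ε : ℝ} (hρ : 2 ≤ ρ) (hτ : τ = 2 * (ρ - 1) / ρ)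
    (hμf : 0 < μf) (hμd : 0 < μd) (hA : 0 < A) (hR0 : 0 < R0) (hε : 0 < ε) :
    2 * (2 * (μf * R0 ^ ρ / ε)) ^ τ * (4 * L ^ 2 * A / (μf ^ 2 * μd * R0 ^ (2 * (ρ - 1)))) ≤
      4 ^ (τ + 1) * L ^ 2 * A / (μf ^ (2 / ρ) * μd) * ε ^ (-τ) := by
  have hρ0 : 0 < ρ := by linarith
  have hRτ : (R0 ^ ρ) ^ τ = R0 ^ (2 * (ρ - 1)) := by
    rw [← rpow_mul hR0.le, hτ]; field_simp
  have hμfτ : μf ^ τ * μf ^ (2 / ρ) = μf ^ 2 := by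
    rw [← rpow_add hμf, ← rpow_natCast, hτ]; congr 1; field_simp; push_cast; ring
  have h4 : (4 : ℝ) ^ (τ + 1) = 4 * (2 ^ τ) ^ 2 := by
    rw [rpow_add_one (by norm_num), show (4 : ℝ) = 2 * 2 by norm_num,
      mul_rpow zero_le_two zero_le_two]
    ring
  have h2τ : (2 : ℝ) ≤ 2 ^ τ :=
    self_le_rpow_of_one_le one_le_two (hτ ▸ one_le_two_mul_sub_one_div hρ)
  have hLHS : 2 * (2 * (μf * R0 ^ ρ / ε)) ^ τ *
      (4 * L ^ 2 * A / (μf ^ 2 * μd * R0 ^ (2 * (ρ - 1)))) =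
        8 * 2 ^ τ * (L ^ 2 * A / (μf ^ (2 / ρ) * μd) * ε ^ (-τ)) := by
    rw [mul_rpow zero_le_two (by positivity), div_rpow (by positivity) hε.le,
      mul_rpow hμf.le (by positivity), hRτ, ← hμfτ, rpow_neg hε.le]
    field_simp
    ring
  rw [hLHS, h4]
  calc 8 * 2 ^ τ * (L ^ 2 * A / (μf ^ (2 / ρ) * μd) * ε ^ (-τ))
      ≤ 4 * (2 ^ τ) ^ 2 * (L ^ 2 * A / (μf ^ (2 / ρ) * μd) * ε ^ (-τ)) :=
        mul_le_mul_of_nonneg_right (by nlinarith) (by positivity)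
    _ = _ := by ring

theorem multistage_uniformly_convex_general
    {E : Type*} [NormedAddCommGroup E]
    (f : E → ℝ) (ρ μf : ℝ) (hρ : 2 ≤ ρ) (hμf : 0 < μf)
    (L : ℝ) (hLpos : 0 < L)
    (A μd : ℝ) (hA : 0 < A) (hμd : 0 < μd)
    (xstar : E)
    (y : ℕ → E)
    (R0 : ℝ) (hR0 : 0 < R0) (hy0 : ‖y 0 - xstar‖ ≤ R0)
    (ε : ℝ) (hε : 0 < ε)
    (τ : ℝ) (hτ : τ = 2 * (ρ - 1) / ρ)
    (Rk : ℕ → ℝ) (hRk : ∀ k, Rk k = ((2 : ℝ) ^ (-(k : ℝ)) * R0 ^ ρ) ^ (1 / ρ))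
    (m : ℕ) (hm : 1 ≤ m) (N : ℕ → ℕ)
    (hN : ∀ k ∈ Finset.Icc 1 m,
      (N k : ℝ) + 1 ≥ (2 : ℝ) ^ (τ * k) * (4 * L ^ 2 * A) /
          (μf ^ 2 * μd * R0 ^ (2 * (ρ - 1))) ∧
      (2 : ℝ) ^ (τ * k) * (4 * L ^ 2 * A) /
          (μf ^ 2 * μd * R0 ^ (2 * (ρ - 1))) ≥ (N k : ℝ))
    (hm2 : (2 : ℝ) ^ m ≥ μf * R0 ^ ρ / ε ∧ μf * R0 ^ ρ / ε ≥ (2 : ℝ) ^ (m - 1))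
    (δ : ℕ → ℝ)
    (hδbound : ∀ k ∈ Finset.Icc 1 m,
      δ k ≤ L * Rk (k - 1) * Real.sqrt (2 * A / (μd * ((N k : ℝ) + 1))))
    (hstage : ∀ k ∈ Finset.Icc 1 m, ‖y (k - 1) - xstar‖ ≤ Rk (k - 1) →
      f (y k) - f xstar ≤ δ k ∧ μf * ‖y k - xstar‖ ^ ρ ≤ δ k) :
    (∀ k ≤ m, ‖y k - xstar‖ ^ ρ ≤ (2 : ℝ) ^ (-(k : ℝ)) * R0 ^ ρ) ∧
    (∀ k ∈ Finset.Icc 1 m, δ k ≤ μf * ((2 : ℝ) ^ (-(k : ℝ)) * R0 ^ ρ)) ∧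
    f (y m) - f xstar ≤ ε ∧
    (∑ k ∈ Finset.Icc 1 m, (N k : ℝ)) ≤
      (4 : ℝ) ^ (τ + 1) * L ^ 2 * A / (μf ^ (2 / ρ) * μd) * ε ^ (-τ) := by
  have hρ0 : 0 < ρ := by linarith
  have hgap : ∀ k ∈ Finset.Icc 1 m, δ k ≤ μf * ((2 : ℝ) ^ (-(k : ℝ)) * R0 ^ ρ) := fun k hk =>
    (hδbound k hk).trans <| hRk (k - 1) ▸ dualAveraging_gap_le_of_stage hρ hτ hμf hμd hLpos hA
      hR0 (Finset.mem_Icc.1 hk).1 (hN k hk).1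
  have hdist := norm_sub_rpow_le_of_stages hρ0 hμf (fun k => by positivity)
    (by simpa using rpow_le_rpow (norm_nonneg _) hy0 hρ0.le) hgap
    (fun k hk hloc => (hstage k hk (hRk (k - 1) ▸ hloc)).2)
  refine ⟨hdist, hgap, ?_, ?_⟩
  · have hmm : m ∈ Finset.Icc 1 m := Finset.mem_Icc.2 ⟨hm, le_rfl⟩
    have hloc : ‖y (m - 1) - xstar‖ ≤ Rk (m - 1) := by
      rw [hRk, one_div, le_rpow_inv_iff_of_pos (norm_nonneg _) (by positivity) hρ0]
      exact hdist _ (Nat.sub_le m 1)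
    calc f (y m) - f xstar ≤ μf * (2 ^ (-(m : ℝ)) * R0 ^ ρ) :=
          (hstage m hmm hloc).1.trans (hgap m hmm)
      _ = μf * R0 ^ ρ / 2 ^ m := by rw [rpow_neg zero_le_two, rpow_natCast]; ring
      _ ≤ ε := by rw [div_le_iff₀ (by positivity)]; linarith [(div_le_iff₀ hε).1 hm2.1]
  · have h2m : (2 : ℝ) ^ m ≤ 2 * (μf * R0 ^ ρ / ε) := by
      rw [← Nat.sub_add_cancel hm, pow_succ']
      exact mul_le_mul_of_nonneg_left hm2.2 zero_le_two
    calc ∑ k ∈ Finset.Icc 1 m, (N k : ℝ)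
        ≤ 2 * ((2 : ℝ) ^ m) ^ τ * (4 * L ^ 2 * A / (μf ^ 2 * μd * R0 ^ (2 * (ρ - 1)))) :=
          sum_Icc_le_two_mul_rpow (hτ ▸ one_le_two_mul_sub_one_div hρ) (by positivity)
            fun k hk => by simpa only [mul_div_assoc] using (hN k hk).2
      _ ≤ 2 * (2 * (μf * R0 ^ ρ / ε)) ^ τ *
            (4 * L ^ 2 * A / (μf ^ 2 * μd * R0 ^ (2 * (ρ - 1)))) := by
          gcongr
          linarith [one_le_two_mul_sub_one_div hρ]
      _ ≤ _ := two_mul_rpow_mul_le_four_rpow hρ hτ hμf hμd hA hR0 hε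

/-- Theorem 3.1, multi-stage method. Given the per-stage
guarantees of Corollary 3.1 (hypotheses `hδbound`, `hstage`), the stage outputs
`y k` and gap values `δ k` of the multi-stage scheme satisfy the stated
localization, gap, accuracy and complexity bounds. -/
theorem multistage_uniformly_convex
    {E : Type*} [NormedAddCommGroup E] [NormedSpace ℝ E] [FiniteDimensional ℝ E]
    (Q : Set E) (hQc : IsClosed Q) (hQconv : Convex ℝ Q)
    (f : E → ℝ) (ρ μf : ℝ) (hρ : 2 ≤ ρ) (hμf : 0 < μf)
    (huc : ∀ x ∈ Q, ∀ y ∈ Q, ∀ α ∈ Set.Icc (0 : ℝ) 1,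
      f (α • x + (1 - α) • y) ≤
        α * f x + (1 - α) * f y -
          (μf / 2) * α * (1 - α) * (α ^ (ρ - 1) + (1 - α) ^ (ρ - 1)) * ‖x - y‖ ^ ρ)
    (L : ℝ) (hLpos : 0 < L)
    (hL : ∀ x ∈ Q, ∀ g : E →L[ℝ] ℝ, (∀ y ∈ Q, f x + g (y - x) ≤ f y) → ‖g‖ ≤ L)
    (A μd : ℝ) (hA : 0 < A) (hμd : 0 < μd)
    (xstar : E) (hxstarQ : xstar ∈ Q) (hxmin : ∀ y ∈ Q, f xstar ≤ f y)
    (y : ℕ → E) (hyQ : ∀ k, y k ∈ Q)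
    (R0 : ℝ) (hR0 : 0 < R0) (hy0 : ‖y 0 - xstar‖ ≤ R0)
    (ε : ℝ) (hε : 0 < ε)
    (τ : ℝ) (hτ : τ = 2 * (ρ - 1) / ρ)
    (Rk : ℕ → ℝ) (hRk : ∀ k, Rk k = ((2 : ℝ) ^ (-(k : ℝ)) * R0 ^ ρ) ^ (1 / ρ))
    (m : ℕ) (hm : 1 ≤ m) (N : ℕ → ℕ)
    (hN : ∀ k ∈ Finset.Icc 1 m,
      (N k : ℝ) + 1 ≥ (2 : ℝ) ^ (τ * k) * (4 * L ^ 2 * A) /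
          (μf ^ 2 * μd * R0 ^ (2 * (ρ - 1))) ∧
      (2 : ℝ) ^ (τ * k) * (4 * L ^ 2 * A) /
          (μf ^ 2 * μd * R0 ^ (2 * (ρ - 1))) ≥ (N k : ℝ))
    (hm2 : (2 : ℝ) ^ m ≥ μf * R0 ^ ρ / ε ∧ μf * R0 ^ ρ / ε ≥ (2 : ℝ) ^ (m - 1))
    (δ : ℕ → ℝ) (hδ0 : ∀ k ∈ Finset.Icc 1 m, 0 ≤ δ k)
    (hδbound : ∀ k ∈ Finset.Icc 1 m,
      δ k ≤ L * Rk (k - 1) * Real.sqrt (2 * A / (μd * ((N k : ℝ) + 1))))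
    (hstage : ∀ k ∈ Finset.Icc 1 m, ‖y (k - 1) - xstar‖ ≤ Rk (k - 1) →
      f (y k) - f xstar ≤ δ k ∧ μf * ‖y k - xstar‖ ^ ρ ≤ δ k) :
    (∀ k ≤ m, ‖y k - xstar‖ ^ ρ ≤ (2 : ℝ) ^ (-(k : ℝ)) * R0 ^ ρ) ∧
    (∀ k ∈ Finset.Icc 1 m, δ k ≤ μf * ((2 : ℝ) ^ (-(k : ℝ)) * R0 ^ ρ)) ∧
    f (y m) - f xstar ≤ ε ∧
    (∑ k ∈ Finset.Icc 1 m, (N k : ℝ)) ≤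
      (4 : ℝ) ^ (τ + 1) * L ^ 2 * A / (μf ^ (2 / ρ) * μd) * ε ^ (-τ) :=
  multistage_uniformly_convex_general f ρ μf hρ hμf L hLpos A μd hA hμd xstar y R0 hR0 hy0 ε hε τ hτ
    Rk hRk m hm N hN hm2 δ hδbound hstage
end

section
/- (Corollary 3.2 of the paper; fixed-budget multi-stage method.) Let f be uniformly convex on Q with parameters ρ ≥ 2 and μ(f) > 0, with subgradients bounded by L > 0 in dual norm; let x* minimize f over Q, f* = f(x*), y₀ ∈ Q with ‖y₀ − x*‖ ≤ R₀, τ = 2(ρ−1)/ρ, R_k = (2^{−k}R₀^ρ)^{1/ρ}. Assume the budget N satisfies N ≥ 2^τ(2^τ+1)·4L²A(d)/(μ(f)²μ(d)R₀^{2(ρ−1)}). For j ≥ 1 let N_j be nonnegative integers with N_j + 1 ≥ 2^{τj}·4L²A(d)/(μ(f)²μ(d)R₀^{2(ρ−1)}) ≥ N_j, and set m(N) = max{k : Σ_{j=1}^{k} N_j ≤ N}. Suppose y₁,…,y_{m(N)} ∈ Q and δ₁,…,δ_{m(N)} ≥ 0 satisfy for each k: δ_k ≤ L R_{k−1}√(2A(d)/(μ(d)(N_k+1))),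 and whenever ‖y_{k−1} − x*‖ ≤ R_{k−1}: f(y_k) − f(x*) ≤ δ_k and μ(f)‖y_k − x*‖^ρ ≤ δ_k. Then f(y_{m(N)}) − f* ≤ 2 (8 L² A(d)/(μ(f)^{2/ρ} μ(d) N))^{1/τ}. -/
/-!
A stage that runs at least `2^τ · 4L²A / (μ(f)² μ(d) R^{2(ρ-1)})` steps from a point within `R`
of `x*` has error bound at most `μ(f) R^ρ / 2`. Since `R_k^ρ = R_{k-1}^ρ / 2` and
`R_{k-1}^{2(ρ-1)} = 2^{-τ(k-1)} R₀^{2(ρ-1)}`, the prescribed `N_k` are exactly that long, so by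
induction every stage starts inside its ball and the error after stage `m` is at most
`μ(f) 2^{-m} R₀^ρ`.
The stage lengths grow geometrically with ratio `2^τ ≥ 2`, so the first `m(N) + 1` stages, which
exceed the budget by maximality of `m(N)`, take at most twice the steps of the last one; solving
`N < 2 · 2^{τ(m+1)} · 4L²A / (μ(f)² μ(d) R₀^{2(ρ-1)})` for `2^{-m}` gives the rate.
-/

noncomputable section

open Real Finset

lemma sum_Icc_one_pow_le_two_mul_pow {r : ℝ} (hr : 2 ≤ r) (k : ℕ) :
    ∑ j ∈ Icc 1 k, r ^ j ≤ 2 * r ^ k := by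
  induction k with
  | zero => simp
  | succ k ih =>
    rw [sum_Icc_succ_top (by omega), pow_succ]
    nlinarith [pow_pos (by linarith : (0 : ℝ) < r) k]

lemma lt_two_mul_pow_succ_of_maximal {Nj : ℕ → ℕ} {N m : ℕ} {q C : ℝ} (hq : 2 ≤ q)
    (hC : 0 ≤ C) (hNj : ∀ j, 1 ≤ j → (Nj j : ℝ) ≤ q ^ j * C)
    (hmax : ∀ k, ∑ j ∈ Icc 1 k, Nj j ≤ N → k ≤ m) :
    (N : ℝ) < 2 * C * q ^ (m + 1) := by
  have hN : N < ∑ j ∈ Icc 1 (m + 1), Nj j := by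
    by_contra! h
    have := hmax _ h
    omega
  calc (N : ℝ) < ∑ j ∈ Icc 1 (m + 1), (Nj j : ℝ) := by exact_mod_cast hN
    _ ≤ ∑ j ∈ Icc 1 (m + 1), q ^ j * C := sum_le_sum fun j hj => hNj j (mem_Icc.mp hj).1
    _ = (∑ j ∈ Icc 1 (m + 1), q ^ j) * C := by rw [sum_mul]
    _ ≤ 2 * q ^ (m + 1) * C := by gcongr; exact sum_Icc_one_pow_le_two_mul_pow hq _
    _ = 2 * C * q ^ (m + 1) := by ring

lemma le_of_stage_invariant {d R δ : ℕ → ℝ} {μ ρ : ℝ} {m : ℕ} (hμ : 0 < μ) (hρ : 0 < ρ)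
    (hd : ∀ k, 0 ≤ d k) (hR : ∀ k, 0 ≤ R k) (h₀ : d 0 ≤ R 0)
    (hδ : ∀ k ∈ Icc 1 m, δ k ≤ μ * R k ^ ρ)
    (hstage : ∀ k ∈ Icc 1 m, d (k - 1) ≤ R (k - 1) → μ * d k ^ ρ ≤ δ k) :
    ∀ k ≤ m, d k ≤ R k := by
  intro k
  induction k with
  | zero => exact fun _ => h₀
  | succ k ih =>
    intro hk
    have hmem : k + 1 ∈ Icc 1 m := mem_Icc.mpr ⟨by omega, hk⟩
    have hpow : μ * d (k + 1) ^ ρ ≤ μ * R (k + 1) ^ ρ :=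
      (hstage _ hmem (ih (by omega))).trans (hδ _ hmem)
    exact (rpow_le_rpow_iff (hd _) (hR _) hρ).mp (le_of_mul_le_mul_left hpow hμ)

lemma stage_bound_le_half_of_le {L A μd μf r ρ c n : ℝ} (hL : 0 < L) (hA : 0 < A)
    (hμd : 0 < μd) (hμf : 0 < μf) (hr : 0 < r) (hc : 2 ≤ c)
    (hn : c * (4 * L ^ 2 * A / (μf ^ 2 * μd * r ^ (2 * (ρ - 1)))) ≤ n) :
    L * r * √(2 * A / (μd * n)) ≤ μf * r ^ ρ / 2 := by
  have hn0 : 0 < n := lt_of_lt_of_le (by positivity) hn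
  have hsq : r ^ 2 * r ^ (2 * (ρ - 1)) = (r ^ ρ) ^ 2 := by
    rw [← rpow_natCast, ← rpow_natCast, ← rpow_add hr, ← rpow_mul hr.le]
    push_cast
    ring_nf
  rw [← pow_le_pow_iff_left₀ (by positivity) (by positivity) two_ne_zero, mul_pow, mul_pow,
    sq_sqrt (by positivity)]
  calc L ^ 2 * r ^ 2 * (2 * A / (μd * n))
      ≤ L ^ 2 * r ^ 2 *
          (2 * A / (μd * (c * (4 * L ^ 2 * A / (μf ^ 2 * μd * r ^ (2 * (ρ - 1))))))) := by
        gcongr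
    _ = μf ^ 2 * (r ^ 2 * r ^ (2 * (ρ - 1))) / (2 * c) := by
        field_simp
        ring
    _ ≤ μf ^ 2 * (r ^ 2 * r ^ (2 * (ρ - 1))) / 4 := by
        gcongr
        linarith
    _ = (μf * r ^ ρ / 2) ^ 2 := by
        rw [hsq]
        ring

def restartRadius (R₀ ρ : ℝ) (k : ℕ) : ℝ :=
  ((2 : ℝ) ^ (-(k : ℝ)) * R₀ ^ ρ) ^ (1 / ρ)

section restartRadius

variable {R₀ ρ : ℝ}

lemma restartRadius_pos (hR₀ : 0 < R₀) (k : ℕ) : 0 < restartRadius R₀ ρ k := by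
  unfold restartRadius
  positivity

lemma restartRadius_zero (hR₀ : 0 ≤ R₀) (hρ : ρ ≠ 0) : restartRadius R₀ ρ 0 = R₀ := by
  rw [restartRadius, Nat.cast_zero, neg_zero, rpow_zero, one_mul, ← rpow_mul hR₀,
    mul_one_div_cancel hρ, rpow_one]

lemma restartRadius_rpow (hR₀ : 0 ≤ R₀) (hρ : ρ ≠ 0) (k : ℕ) (p : ℝ) :
    restartRadius R₀ ρ k ^ p = R₀ ^ p / ((2 : ℝ) ^ (p / ρ)) ^ k := by
  have hk : (k : ℝ) * (1 / ρ * p) = p / ρ * k := by ring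
  have hp : ρ * (1 / ρ * p) = p := by field_simp
  rw [restartRadius, ← rpow_mul (by positivity), mul_rpow (by positivity) (by positivity),
    ← rpow_mul hR₀, rpow_neg zero_le_two, rpow_natCast, inv_rpow (by positivity),
    ← rpow_natCast, ← rpow_mul zero_le_two, hk, hp, rpow_mul_natCast zero_le_two, inv_mul_eq_div]

lemma restartRadius_rpow_self (hR₀ : 0 ≤ R₀) (hρ : ρ ≠ 0) (k : ℕ) :
    restartRadius R₀ ρ k ^ ρ = R₀ ^ ρ / 2 ^ k := by
  rw [restartRadius_rpow hR₀ hρ, div_self hρ, rpow_one]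

lemma stage_bound_le_restartRadius {L A μd μf τ n : ℝ} {k : ℕ} (hL : 0 < L) (hA : 0 < A)
    (hμd : 0 < μd) (hμf : 0 < μf) (hR₀ : 0 < R₀) (hρ : 0 < ρ) (hτ : τ = 2 * (ρ - 1) / ρ)
    (hq : 2 ≤ (2 : ℝ) ^ τ)
    (hn : ((2 : ℝ) ^ τ) ^ (k + 1) * (4 * L ^ 2 * A / (μf ^ 2 * μd * R₀ ^ (2 * (ρ - 1)))) ≤ n) :
    L * restartRadius R₀ ρ k * √(2 * A / (μd * n)) ≤ μf * restartRadius R₀ ρ (k + 1) ^ ρ := by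
  have hn' : (2 : ℝ) ^ τ *
      (4 * L ^ 2 * A / (μf ^ 2 * μd * restartRadius R₀ ρ k ^ (2 * (ρ - 1)))) ≤ n := by
    refine le_of_eq_of_le ?_ hn
    rw [restartRadius_rpow hR₀.le hρ.ne', ← hτ]
    field_simp
    ring
  calc L * restartRadius R₀ ρ k * √(2 * A / (μd * n))
      ≤ μf * restartRadius R₀ ρ k ^ ρ / 2 :=
        stage_bound_le_half_of_le hL hA hμd hμf (restartRadius_pos hR₀ k) hq hn'
    _ = μf * restartRadius R₀ ρ (k + 1) ^ ρ := by
        rw [restartRadius_rpow_self hR₀.le hρ.ne', restartRadius_rpow_self hR₀.le hρ.ne',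
          pow_succ]
        ring

lemma mul_restartRadius_rpow_le_of_lt {L A μd μf τ : ℝ} {m N : ℕ} (hρ : 1 < ρ)
    (hτ : τ = 2 * (ρ - 1) / ρ) (hA : 0 < A) (hμd : 0 < μd) (hμf : 0 < μf) (hR₀ : 0 < R₀)
    (hN : 0 < N)
    (hNm : (N : ℝ) < 2 * (4 * L ^ 2 * A / (μf ^ 2 * μd * R₀ ^ (2 * (ρ - 1)))) *
      ((2 : ℝ) ^ τ) ^ (m + 1)) :
    μf * restartRadius R₀ ρ m ^ ρ ≤
      2 * (8 * L ^ 2 * A / (μf ^ (2 / ρ) * μd * N)) ^ (1 / τ) := by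
  have hρ0 : 0 < ρ := by linarith
  have hτ0 : 0 < τ := by rw [hτ]; apply div_pos <;> linarith
  have hμ : μf ^ τ * μf ^ (2 / ρ) = μf ^ 2 := by
    rw [← rpow_add hμf, ← rpow_two, hτ]
    congr 1
    field_simp
    ring
  have hR : (R₀ ^ ρ) ^ τ = R₀ ^ (2 * (ρ - 1)) := by
    rw [← rpow_mul hR₀.le, hτ]
    congr 1
    field_simp
  have h2 : ((2 : ℝ) ^ m) ^ τ = ((2 : ℝ) ^ τ) ^ m := by
    rw [← rpow_natCast, ← rpow_natCast, ← rpow_mul zero_le_two, ← rpow_mul zero_le_two, mul_comm]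
  rw [restartRadius_rpow_self hR₀.le hρ0.ne', ← div_le_iff₀' two_pos, one_div,
    le_rpow_inv_iff_of_pos (by positivity) (by positivity) hτ0,
    div_rpow (by positivity) zero_le_two, mul_rpow hμf.le (by positivity),
    div_rpow (by positivity) (by positivity), hR, h2, mul_div_assoc', div_div,
    div_le_div_iff₀ (by positivity) (by positivity)]
  calc μf ^ τ * R₀ ^ (2 * (ρ - 1)) * (μf ^ (2 / ρ) * μd * N)
      = N * (μf ^ 2 * μd * R₀ ^ (2 * (ρ - 1))) := by rw [← hμ]; ring
    _ ≤ 2 * (4 * L ^ 2 * A / (μf ^ 2 * μd * R₀ ^ (2 * (ρ - 1)))) * ((2 : ℝ) ^ τ) ^ (m + 1) *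
          (μf ^ 2 * μd * R₀ ^ (2 * (ρ - 1))) := by gcongr
    _ = 8 * L ^ 2 * A * (((2 : ℝ) ^ τ) ^ m * 2 ^ τ) := by field_simp; ring

end restartRadius

theorem multistage_fixed_budget_general
    {E : Type*} [NormedAddCommGroup E]
    (f : E → ℝ) (ρ μf : ℝ) (hρ : 2 ≤ ρ) (hμf : 0 < μf)
    (L : ℝ) (hLpos : 0 < L)
    (A μd : ℝ) (hA : 0 < A) (hμd : 0 < μd)
    (xstar : E)
    (y : ℕ → E)
    (R0 : ℝ) (hR0 : 0 < R0) (hy0 : ‖y 0 - xstar‖ ≤ R0)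
    (τ : ℝ) (hτ : τ = 2 * (ρ - 1) / ρ)
    (Rk : ℕ → ℝ) (hRk : ∀ k, Rk k = ((2 : ℝ) ^ (-(k : ℝ)) * R0 ^ ρ) ^ (1 / ρ))
    (N : ℕ)
    (hbudget : (N : ℝ) ≥ (2 : ℝ) ^ τ * ((2 : ℝ) ^ τ + 1) * (4 * L ^ 2 * A) /
      (μf ^ 2 * μd * R0 ^ (2 * (ρ - 1))))
    (Nj : ℕ → ℕ)
    (hNj : ∀ j : ℕ, 1 ≤ j →
      (Nj j : ℝ) + 1 ≥ (2 : ℝ) ^ (τ * j) * (4 * L ^ 2 * A) /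
          (μf ^ 2 * μd * R0 ^ (2 * (ρ - 1))) ∧
      (2 : ℝ) ^ (τ * j) * (4 * L ^ 2 * A) /
          (μf ^ 2 * μd * R0 ^ (2 * (ρ - 1))) ≥ (Nj j : ℝ))
    (mN : ℕ)
    (hmN : (∑ j ∈ Finset.Icc 1 mN, Nj j) ≤ N ∧
      ∀ k : ℕ, (∑ j ∈ Finset.Icc 1 k, Nj j) ≤ N → k ≤ mN)
    (δ : ℕ → ℝ)
    (hδbound : ∀ k ∈ Finset.Icc 1 mN,
      δ k ≤ L * Rk (k - 1) * Real.sqrt (2 * A / (μd * ((Nj k : ℝ) + 1))))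
    (hstage : ∀ k ∈ Finset.Icc 1 mN, ‖y (k - 1) - xstar‖ ≤ Rk (k - 1) →
      f (y k) - f xstar ≤ δ k ∧ μf * ‖y k - xstar‖ ^ ρ ≤ δ k) :
    f (y mN) - f xstar ≤
      2 * (8 * L ^ 2 * A / (μf ^ (2 / ρ) * μd * N)) ^ (1 / τ) := by
  obtain rfl : Rk = restartRadius R0 ρ := funext hRk
  have hρ0 : 0 < ρ := by linarith
  have hq : 2 ≤ (2 : ℝ) ^ τ := by
    have hτ1 : 1 ≤ τ := by rw [hτ, le_div_iff₀ hρ0]; linarith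
    simpa using rpow_le_rpow_of_exponent_le one_le_two hτ1
  simp only [ge_iff_le, mul_div_assoc _ (4 * L ^ 2 * A), rpow_mul_natCast zero_le_two]
    at hNj hbudget
  set C := 4 * L ^ 2 * A / (μf ^ 2 * μd * R0 ^ (2 * (ρ - 1)))
  have hC : 0 < C := by positivity
  have hδ : ∀ k ∈ Icc 1 mN, δ k ≤ μf * restartRadius R0 ρ k ^ ρ := by
    intro k hk
    obtain ⟨j, rfl⟩ : ∃ j, k = j + 1 := ⟨k - 1, by have := (mem_Icc.mp hk).1; omega⟩
    exact (hδbound _ hk).trans (stage_bound_le_restartRadius hLpos hA hμd hμf hR0 hρ0 hτ hq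
      (hNj (j + 1) (by omega)).1)
  have hdist := le_of_stage_invariant hμf hρ0 (fun k => norm_nonneg (y k - xstar))
    (fun k => (restartRadius_pos hR0 k).le) (hy0.trans_eq (restartRadius_zero hR0.le hρ0.ne').symm)
    hδ (fun k hk h => (hstage k hk h).2)
  have hfirst : (2 : ℝ) ^ τ * C ≤ N := by nlinarith [mul_pos (by positivity : (0 : ℝ) < 2 ^ τ) hC]
  have hN : 0 < N := by exact_mod_cast (by positivity : (0 : ℝ) < 2 ^ τ * C).trans_le hfirst
  have hm1 : 1 ≤ mN := hmN.2 1 <| by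
    have h₁ : (Nj 1 : ℝ) ≤ N := ((hNj 1 le_rfl).2.trans_eq (by rw [pow_one])).trans hfirst
    simpa using h₁
  have hlast : mN ∈ Icc 1 mN := mem_Icc.mpr ⟨hm1, le_rfl⟩
  calc f (y mN) - f xstar ≤ δ mN := (hstage mN hlast (hdist _ (Nat.sub_le mN 1))).1
    _ ≤ μf * restartRadius R0 ρ mN ^ ρ := hδ mN hlast
    _ ≤ _ := mul_restartRadius_rpow_le_of_lt (by linarith) hτ hA hμd hμf hR0 hN
        (lt_two_mul_pow_succ_of_maximal hq hC.le (fun j hj => (hNj j hj).2) hmN.2)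

/-- Corollary 3.2, fixed-budget multi-stage method. -/
theorem multistage_fixed_budget
    {E : Type*} [NormedAddCommGroup E] [NormedSpace ℝ E] [FiniteDimensional ℝ E]
    (Q : Set E) (hQc : IsClosed Q) (hQconv : Convex ℝ Q)
    (f : E → ℝ) (ρ μf : ℝ) (hρ : 2 ≤ ρ) (hμf : 0 < μf)
    (huc : ∀ x ∈ Q, ∀ y ∈ Q, ∀ α ∈ Set.Icc (0 : ℝ) 1,
      f (α • x + (1 - α) • y) ≤
        α * f x + (1 - α) * f y -
          (μf / 2) * α * (1 - α) * (α ^ (ρ - 1) + (1 - α) ^ (ρ - 1)) * ‖x - y‖ ^ ρ)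
    (L : ℝ) (hLpos : 0 < L)
    (hL : ∀ x ∈ Q, ∀ g : E →L[ℝ] ℝ, (∀ y ∈ Q, f x + g (y - x) ≤ f y) → ‖g‖ ≤ L)
    (A μd : ℝ) (hA : 0 < A) (hμd : 0 < μd)
    (xstar : E) (hxstarQ : xstar ∈ Q) (hxmin : ∀ y ∈ Q, f xstar ≤ f y)
    (y : ℕ → E) (hyQ : ∀ k, y k ∈ Q)
    (R0 : ℝ) (hR0 : 0 < R0) (hy0 : ‖y 0 - xstar‖ ≤ R0)
    (τ : ℝ) (hτ : τ = 2 * (ρ - 1) / ρ)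
    (Rk : ℕ → ℝ) (hRk : ∀ k, Rk k = ((2 : ℝ) ^ (-(k : ℝ)) * R0 ^ ρ) ^ (1 / ρ))
    (N : ℕ)
    (hbudget : (N : ℝ) ≥ (2 : ℝ) ^ τ * ((2 : ℝ) ^ τ + 1) * (4 * L ^ 2 * A) /
      (μf ^ 2 * μd * R0 ^ (2 * (ρ - 1))))
    (Nj : ℕ → ℕ)
    (hNj : ∀ j : ℕ, 1 ≤ j →
      (Nj j : ℝ) + 1 ≥ (2 : ℝ) ^ (τ * j) * (4 * L ^ 2 * A) /
          (μf ^ 2 * μd * R0 ^ (2 * (ρ - 1))) ∧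
      (2 : ℝ) ^ (τ * j) * (4 * L ^ 2 * A) /
          (μf ^ 2 * μd * R0 ^ (2 * (ρ - 1))) ≥ (Nj j : ℝ))
    (mN : ℕ)
    (hmN : (∑ j ∈ Finset.Icc 1 mN, Nj j) ≤ N ∧
      ∀ k : ℕ, (∑ j ∈ Finset.Icc 1 k, Nj j) ≤ N → k ≤ mN)
    (δ : ℕ → ℝ) (hδ0 : ∀ k ∈ Finset.Icc 1 mN, 0 ≤ δ k)
    (hδbound : ∀ k ∈ Finset.Icc 1 mN,
      δ k ≤ L * Rk (k - 1) * Real.sqrt (2 * A / (μd * ((Nj k : ℝ) + 1))))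
    (hstage : ∀ k ∈ Finset.Icc 1 mN, ‖y (k - 1) - xstar‖ ≤ Rk (k - 1) →
      f (y k) - f xstar ≤ δ k ∧ μf * ‖y k - xstar‖ ^ ρ ≤ δ k) :
    f (y mN) - f xstar ≤
      2 * (8 * L ^ 2 * A / (μf ^ (2 / ρ) * μd * N)) ^ (1 / τ) :=
  multistage_fixed_budget_general f ρ μf hρ hμf L hLpos A μd hA hμd xstar y R0 hR0 hy0 τ hτ Rk hRk N
    hbudget Nj hNj mN hmN δ hδbound hstage
end
end

section
/- (Theorem 3.2, multi-stage method with a prox-function of quadratic growth.) Let f be uniformly convex on Q with parameters ρ ≥ 2 and μ(f) > 0, with subgradients bounded by L > 0 in dual norm; let x* minimize f over Q, f* = f(x*), and suppose ‖x − x*‖ ≤ R₀ for all x ∈ Q. Fix ε > 0, τ = 2(ρ−1)/ρ, r_k = (2^{−k}R₀^ρ)^{1/ρ}. Let m ≥ 1 with 2^m ≥ μ(f)R₀^ρ/ε ≥ 2^{m−1}, and let N₁,…,N_m be nonnegative integers with N_k + 1 ≥ 2^{τk}·4L²C(d)/(μ(f)²μ(d)R₀^{2(ρ−1)}) ≥ N_k.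 Suppose y₀ ∈ Q and y₁,…,y_m ∈ Q satisfy, for each k = 1,…,m: whenever ‖y_{k−1} − x*‖ ≤ r_{k−1}, both f(y_k) − f(x*) ≤ r_{k−1} L √(2C(d)/(μ(d)(N_k+1))) and μ(f)‖y_k − x*‖^ρ ≤ r_{k−1} L √(2C(d)/(μ(d)(N_k+1))). Then ‖y_k − x*‖^ρ ≤ 2^{−k}R₀^ρ for all k = 0,…,m, f(y_m) − f* ≤ ε, and Σ_{k=1}^{m} N_k ≤ 4^{τ+1} L² C(d)/(μ(f)^{2/ρ} μ(d)) · ε^{−τ}. -/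
/-!
Stage `k` starts from a point within `r_{k-1}` of `x*`, so its guarantee bounds both the
gap and `μ(f)‖y_k - x*‖^ρ` by `r_{k-1} L √(2C(d)/(μ(d)(N_k+1)))`. The choice of `N_k`
makes this at most `μ(f) 2^{-k} R₀^ρ`, which is exactly the next radius condition; by
induction every stage halves `‖y_k - x*‖^ρ`. The choice of `m` turns `μ(f) 2^{-m} R₀^ρ`
into `ε`, and `∑ N_k` is a geometric sum of ratio `2^τ ≥ 2`, hence at most twice its last
term.
-/

open Real Finset

noncomputable def stageRadius (ρ R₀ t : ℝ) : ℝ := ((2 : ℝ) ^ (-t) * R₀ ^ ρ) ^ (1 / ρ)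

lemma stageRadius_eq {ρ R₀ : ℝ} (hρ : ρ ≠ 0) (hR₀ : 0 ≤ R₀) (t : ℝ) :
    stageRadius ρ R₀ t = 2 ^ (-t / ρ) * R₀ := by
  rw [stageRadius, mul_rpow (by positivity) (rpow_nonneg hR₀ ρ), ← rpow_mul zero_le_two,
    ← rpow_mul hR₀, mul_one_div, mul_one_div_cancel hρ, rpow_one]

lemma le_stageRadius_iff {ρ R₀ x : ℝ} (hρ : 0 < ρ) (hR₀ : 0 ≤ R₀) (hx : 0 ≤ x) (t : ℝ) :
    x ≤ stageRadius ρ R₀ t ↔ x ^ ρ ≤ 2 ^ (-t) * R₀ ^ ρ := by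
  rw [stageRadius, one_div, le_rpow_inv_iff_of_pos hx (by positivity) hρ]

lemma two_rpow_neg_sub_one_div_sq_le {ρ τ : ℝ} (hρ : 2 ≤ ρ) (hτ : τ = 2 * (ρ - 1) / ρ) (k : ℝ) :
    ((2 : ℝ) ^ (-(k - 1) / ρ)) ^ 2 ≤ 2 * 2 ^ (τ * k) * ((2 : ℝ) ^ (-k)) ^ 2 := by
  have hρ0 : 0 < ρ := by linarith
  have hexp : -(k - 1) / ρ * 2 = 1 + τ * k + -k * 2 - (1 - 2 / ρ) := by
    rw [hτ]; field_simp; ring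
  have hslack : 0 ≤ 1 - 2 / ρ := by rw [sub_nonneg, div_le_one hρ0]; exact hρ
  simp only [← rpow_natCast, ← rpow_mul zero_le_two, Nat.cast_ofNat]
  calc (2 : ℝ) ^ (-(k - 1) / ρ * 2) ≤ 2 ^ (1 + τ * k + -k * 2) :=
        rpow_le_rpow_of_exponent_le one_le_two (by linarith)
    _ = 2 * 2 ^ (τ * k) * 2 ^ (-k * 2) := by
        rw [rpow_add zero_lt_two, rpow_add zero_lt_two, rpow_one]

lemma stageRadius_sub_one_mul_sqrt_le {ρ τ μf L C μd R₀ N k : ℝ} (hρ : 2 ≤ ρ)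
    (hτ : τ = 2 * (ρ - 1) / ρ) (hμf : 0 < μf) (hL : 0 < L) (hC : 0 < C) (hμd : 0 < μd)
    (hR₀ : 0 < R₀)
    (hN : 2 ^ (τ * k) * (4 * L ^ 2 * C) / (μf ^ 2 * μd * R₀ ^ (2 * (ρ - 1))) ≤ N + 1) :
    stageRadius ρ R₀ (k - 1) * L * √(2 * C / (μd * (N + 1))) ≤ μf * (2 ^ (-k) * R₀ ^ ρ) := by
  have hR : R₀ ^ 2 * R₀ ^ (2 * (ρ - 1)) = (R₀ ^ ρ) ^ 2 := by
    rw [← rpow_natCast, ← rpow_natCast, ← rpow_mul hR₀.le, ← rpow_add hR₀]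
    ring_nf
  rw [stageRadius_eq (by linarith) hR₀.le]
  set u := (2 : ℝ) ^ (-(k - 1) / ρ)
  set v := (2 : ℝ) ^ (τ * k)
  set w := (2 : ℝ) ^ (-k)
  set X := R₀ ^ (2 * (ρ - 1))
  have hv : 0 < v := by positivity
  have hX : 0 < X := by positivity
  have hB : 0 < v * (4 * L ^ 2 * C) / (μf ^ 2 * μd * X) := by positivity
  rw [← sqrt_sq (by positivity : 0 ≤ u * R₀ * L), ← sqrt_mul (sq_nonneg _),
    ← sqrt_sq (by positivity : 0 ≤ μf * (w * R₀ ^ ρ))]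
  refine sqrt_le_sqrt ?_
  calc (u * R₀ * L) ^ 2 * (2 * C / (μd * (N + 1)))
      ≤ (u * R₀ * L) ^ 2 * (2 * C / (μd * (v * (4 * L ^ 2 * C) / (μf ^ 2 * μd * X)))) := by
        gcongr
    _ = u ^ 2 * μf ^ 2 * (R₀ ^ 2 * X) / (2 * v) := by
        field_simp
        ring
    _ ≤ 2 * v * w ^ 2 * μf ^ 2 * (R₀ ^ 2 * X) / (2 * v) := by
        gcongr
        exact two_rpow_neg_sub_one_div_sq_le hρ hτ k
    _ = (μf * (w * R₀ ^ ρ)) ^ 2 := by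
        rw [hR]
        field_simp

lemma sum_Icc_pow_le_two_mul_pow_s6 {x : ℝ} (hx : 2 ≤ x) (m : ℕ) :
    ∑ k ∈ Icc 1 m, x ^ k ≤ 2 * x ^ m := by
  induction m with
  | zero => simp
  | succ m ih =>
    rw [sum_Icc_succ_top (by omega), pow_succ]
    nlinarith [pow_pos (by linarith : (0 : ℝ) < x) m]

lemma sum_Icc_le_two_mul_rpow_mul {τ B D : ℝ} {m : ℕ} {a : ℕ → ℝ} (hτ : 1 ≤ τ) (hB : 0 ≤ B)
    (ha : ∀ k ∈ Icc 1 m, a k ≤ 2 ^ (τ * k) * B) (hD : (2 : ℝ) ^ m ≤ 2 * D) :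
    ∑ k ∈ Icc 1 m, a k ≤ 2 * (2 * D) ^ τ * B := by
  have hτ2 : (2 : ℝ) ≤ 2 ^ τ := by
    simpa using rpow_le_rpow_of_exponent_le one_le_two hτ
  calc ∑ k ∈ Icc 1 m, a k ≤ ∑ k ∈ Icc 1 m, ((2 : ℝ) ^ τ) ^ k * B := by
        refine sum_le_sum fun k hk ↦ ?_
        rw [← rpow_natCast, ← rpow_mul zero_le_two]
        exact ha k hk
    _ ≤ 2 * ((2 : ℝ) ^ τ) ^ m * B := by
        rw [← sum_mul]
        gcongr
        exact sum_Icc_pow_le_two_mul_pow_s6 hτ2 m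
    _ = 2 * ((2 : ℝ) ^ m) ^ τ * B := by
        rw [← rpow_natCast, ← rpow_mul zero_le_two, mul_comm τ, rpow_mul zero_le_two,
          rpow_natCast]
    _ ≤ 2 * (2 * D) ^ τ * B := by gcongr

lemma two_mul_rpow_mul_le {ρ τ μf L C μd R0 ε : ℝ} (hρ : 2 ≤ ρ) (hτ : τ = 2 * (ρ - 1) / ρ)
    (hμf : 0 < μf) (hC : 0 ≤ C) (hμd : 0 < μd) (hR0 : 0 < R0) (hε : 0 < ε) :
    2 * (2 * (μf * R0 ^ ρ / ε)) ^ τ * (4 * L ^ 2 * C / (μf ^ 2 * μd * R0 ^ (2 * (ρ - 1)))) ≤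
      (4 : ℝ) ^ (τ + 1) * L ^ 2 * C / (μf ^ (2 / ρ) * μd) * ε ^ (-τ) := by
  have hρ0 : 0 < ρ := by linarith
  have hτ1 : 1 ≤ τ := by rw [hτ, le_div_iff₀ hρ0]; linarith
  have hR : (R0 ^ ρ) ^ τ = R0 ^ (2 * (ρ - 1)) := by
    rw [← rpow_mul hR0.le, hτ]; field_simp
  have hμ : μf ^ 2 = μf ^ τ * μf ^ (2 / ρ) := by
    rw [← rpow_natCast, ← rpow_add hμf, hτ]; congr 1; field_simp; ring
  have h4 : (4 : ℝ) ^ (τ + 1) = 2 ^ τ * 2 ^ τ * 4 := by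
    rw [rpow_add_one (by norm_num), show (4 : ℝ) = 2 * 2 by norm_num,
      mul_rpow zero_le_two zero_le_two]
  have h2 : (2 : ℝ) ≤ 2 ^ τ := by simpa using rpow_le_rpow_of_exponent_le one_le_two hτ1
  rw [rpow_neg hε.le]
  set K := L ^ 2 * C / (μf ^ (2 / ρ) * μd) * (ε ^ τ)⁻¹ with hK_def
  have hK : 0 ≤ K := by positivity
  calc 2 * (2 * (μf * R0 ^ ρ / ε)) ^ τ * (4 * L ^ 2 * C / (μf ^ 2 * μd * R0 ^ (2 * (ρ - 1))))
      = 8 * 2 ^ τ * K := by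
        rw [mul_rpow zero_le_two (by positivity), div_rpow (by positivity) hε.le,
          mul_rpow hμf.le (by positivity), hR, hμ, hK_def]
        field_simp
        ring
    _ ≤ 4 * 2 ^ τ * 2 ^ τ * K := by gcongr; linarith
    _ = (4 : ℝ) ^ (τ + 1) * L ^ 2 * C / (μf ^ (2 / ρ) * μd) * (ε ^ τ)⁻¹ := by
        rw [h4]; ring

lemma mul_two_rpow_neg_mul_le {μ P ε : ℝ} {m : ℕ} (hε : 0 < ε) (hm : μ * P / ε ≤ 2 ^ m) :
    μ * (2 ^ (-(m : ℝ)) * P) ≤ ε := by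
  rw [rpow_neg zero_le_two, rpow_natCast, ← mul_assoc, mul_comm μ, mul_assoc,
    inv_mul_le_iff₀ (by positivity), ← div_le_iff₀ hε]
  exact hm

theorem multistage_quadratic_growth_general
    {E : Type*} [NormedAddCommGroup E] [NormedSpace ℝ E]
    (Q : Set E)
    (f : E → ℝ) (ρ μf : ℝ) (hρ : 2 ≤ ρ) (hμf : 0 < μf)
    (L : ℝ) (hLpos : 0 < L)
    (C μd : ℝ) (hC : 0 < C) (hμd : 0 < μd)
    (xstar : E)
    (R0 : ℝ) (hR0 : 0 < R0) (hQR0 : ∀ x ∈ Q, ‖x - xstar‖ ≤ R0)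
    (ε : ℝ) (hε : 0 < ε)
    (τ : ℝ) (hτ : τ = 2 * (ρ - 1) / ρ)
    (rk : ℕ → ℝ) (hrk : ∀ k, rk k = ((2 : ℝ) ^ (-(k : ℝ)) * R0 ^ ρ) ^ (1 / ρ))
    (m : ℕ) (hm : 1 ≤ m)
    (hm2 : (2 : ℝ) ^ m ≥ μf * R0 ^ ρ / ε ∧ μf * R0 ^ ρ / ε ≥ (2 : ℝ) ^ (m - 1))
    (N : ℕ → ℕ)
    (hN : ∀ k ∈ Finset.Icc 1 m,
      (N k : ℝ) + 1 ≥ (2 : ℝ) ^ (τ * k) * (4 * L ^ 2 * C) /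
          (μf ^ 2 * μd * R0 ^ (2 * (ρ - 1))) ∧
      (2 : ℝ) ^ (τ * k) * (4 * L ^ 2 * C) /
          (μf ^ 2 * μd * R0 ^ (2 * (ρ - 1))) ≥ (N k : ℝ))
    (y : ℕ → E) (hyQ : ∀ k, y k ∈ Q)
    (hstage : ∀ k ∈ Finset.Icc 1 m, ‖y (k - 1) - xstar‖ ≤ rk (k - 1) →
      f (y k) - f xstar ≤
        rk (k - 1) * L * Real.sqrt (2 * C / (μd * ((N k : ℝ) + 1))) ∧
      μf * ‖y k - xstar‖ ^ ρ ≤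
        rk (k - 1) * L * Real.sqrt (2 * C / (μd * ((N k : ℝ) + 1)))) :
    (∀ k ≤ m, ‖y k - xstar‖ ^ ρ ≤ (2 : ℝ) ^ (-(k : ℝ)) * R0 ^ ρ) ∧
    f (y m) - f xstar ≤ ε ∧
    (∑ k ∈ Finset.Icc 1 m, (N k : ℝ)) ≤
      (4 : ℝ) ^ (τ + 1) * L ^ 2 * C / (μf ^ (2 / ρ) * μd) * ε ^ (-τ) := by
  have hρ0 : 0 < ρ := by linarith
  have hτ1 : 1 ≤ τ := by rw [hτ, le_div_iff₀ hρ0]; linarith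
  have hr : ∀ k : ℕ, rk k = stageRadius ρ R0 k := hrk
  have hcontract : ∀ k ∈ Icc 1 m,
      rk (k - 1) * L * √(2 * C / (μd * ((N k : ℝ) + 1))) ≤ μf * (2 ^ (-(k : ℝ)) * R0 ^ ρ) := by
    intro k hk
    rw [hr, Nat.cast_sub (mem_Icc.1 hk).1, Nat.cast_one]
    exact stageRadius_sub_one_mul_sqrt_le hρ hτ hμf hLpos hC hμd hR0 (hN k hk).1
  have hdist : ∀ k ≤ m, ‖y k - xstar‖ ^ ρ ≤ 2 ^ (-(k : ℝ)) * R0 ^ ρ := by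
    intro k hk
    induction k with
    | zero => simpa using rpow_le_rpow (norm_nonneg _) (hQR0 _ (hyQ 0)) hρ0.le
    | succ k ih =>
      have hmem : k + 1 ∈ Icc 1 m := mem_Icc.2 ⟨by omega, hk⟩
      have hin := (le_stageRadius_iff hρ0 hR0.le (norm_nonneg _) k).2 (ih (by omega))
      exact le_of_mul_le_mul_left
        ((hstage _ hmem (hr k ▸ hin)).2.trans (hcontract _ hmem)) hμf
  have hmem : m ∈ Icc 1 m := mem_Icc.2 ⟨hm, le_rfl⟩
  have hin := (le_stageRadius_iff hρ0 hR0.le (norm_nonneg _) _).2 (hdist _ (Nat.sub_le m 1))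
  have hgap := (hstage m hmem (hr _ ▸ hin)).1.trans (hcontract m hmem)
  have hD : (2 : ℝ) ^ m ≤ 2 * (μf * R0 ^ ρ / ε) := by
    rw [← Nat.sub_add_cancel hm, pow_succ]; linarith [hm2.2]
  refine ⟨hdist, hgap.trans (mul_two_rpow_neg_mul_le hε hm2.1), ?_⟩
  refine (sum_Icc_le_two_mul_rpow_mul hτ1 (by positivity) (fun k hk ↦ ?_) hD).trans
    (two_mul_rpow_mul_le hρ hτ hμf hC.le hμd hR0 hε)
  rw [← mul_div_assoc]
  exact (hN k hk).2

/-- Theorem 3.2, multi-stage method with a prox-function of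
quadratic growth constant `C`. The per-stage hypotheses are the guarantees of
the quadratic-growth dual-averaging stage. -/
theorem multistage_quadratic_growth
    {E : Type*} [NormedAddCommGroup E] [NormedSpace ℝ E] [FiniteDimensional ℝ E]
    (Q : Set E) (hQc : IsClosed Q) (hQconv : Convex ℝ Q)
    (f : E → ℝ) (ρ μf : ℝ) (hρ : 2 ≤ ρ) (hμf : 0 < μf)
    (huc : ∀ x ∈ Q, ∀ y ∈ Q, ∀ α ∈ Set.Icc (0 : ℝ) 1,
      f (α • x + (1 - α) • y) ≤
        α * f x + (1 - α) * f y -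
          (μf / 2) * α * (1 - α) * (α ^ (ρ - 1) + (1 - α) ^ (ρ - 1)) * ‖x - y‖ ^ ρ)
    (L : ℝ) (hLpos : 0 < L)
    (hL : ∀ x ∈ Q, ∀ g : E →L[ℝ] ℝ, (∀ y ∈ Q, f x + g (y - x) ≤ f y) → ‖g‖ ≤ L)
    (C μd : ℝ) (hC : 0 < C) (hμd : 0 < μd)
    (xstar : E) (hxstarQ : xstar ∈ Q) (hxmin : ∀ y ∈ Q, f xstar ≤ f y)
    (R0 : ℝ) (hR0 : 0 < R0) (hQR0 : ∀ x ∈ Q, ‖x - xstar‖ ≤ R0)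
    (ε : ℝ) (hε : 0 < ε)
    (τ : ℝ) (hτ : τ = 2 * (ρ - 1) / ρ)
    (rk : ℕ → ℝ) (hrk : ∀ k, rk k = ((2 : ℝ) ^ (-(k : ℝ)) * R0 ^ ρ) ^ (1 / ρ))
    (m : ℕ) (hm : 1 ≤ m)
    (hm2 : (2 : ℝ) ^ m ≥ μf * R0 ^ ρ / ε ∧ μf * R0 ^ ρ / ε ≥ (2 : ℝ) ^ (m - 1))
    (N : ℕ → ℕ)
    (hN : ∀ k ∈ Finset.Icc 1 m,
      (N k : ℝ) + 1 ≥ (2 : ℝ) ^ (τ * k) * (4 * L ^ 2 * C) /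
          (μf ^ 2 * μd * R0 ^ (2 * (ρ - 1))) ∧
      (2 : ℝ) ^ (τ * k) * (4 * L ^ 2 * C) /
          (μf ^ 2 * μd * R0 ^ (2 * (ρ - 1))) ≥ (N k : ℝ))
    (y : ℕ → E) (hyQ : ∀ k, y k ∈ Q)
    (hstage : ∀ k ∈ Finset.Icc 1 m, ‖y (k - 1) - xstar‖ ≤ rk (k - 1) →
      f (y k) - f xstar ≤
        rk (k - 1) * L * Real.sqrt (2 * C / (μd * ((N k : ℝ) + 1))) ∧
      μf * ‖y k - xstar‖ ^ ρ ≤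
        rk (k - 1) * L * Real.sqrt (2 * C / (μd * ((N k : ℝ) + 1)))) :
    (∀ k ≤ m, ‖y k - xstar‖ ^ ρ ≤ (2 : ℝ) ^ (-(k : ℝ)) * R0 ^ ρ) ∧
    f (y m) - f xstar ≤ ε ∧
    (∑ k ∈ Finset.Icc 1 m, (N k : ℝ)) ≤
      (4 : ℝ) ^ (τ + 1) * L ^ 2 * C / (μf ^ (2 / ρ) * μd) * ε ^ (-τ) :=
  multistage_quadratic_growth_general Q f ρ μf hρ hμf L hLpos C μd hC hμd xstar R0 hR0 hQR0 ε hε τ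
    hτ rk hrk m hm hm2 N hN y hyQ hstage
end

section
/- (Key estimate in the proof of the lower complexity bound, Theorem A.1.) Let ρ ≥ 2, L > 0, R > 0, ε ∈ (0,1), and let M be a positive integer. Set δ = min{ L R/(4√M), L^{ρ/(ρ−1)}/(8 M^{ρ/(2(ρ−1))}) } − ε and assume δ > 0. Set λ = min{ R/√M, (2^{2−ρ} L/(ρ M^{ρ/2}))^{1/(ρ−1)} }. Then −(L/2)λ + 2^{ρ−3} M^{ρ/2} λ^ρ + δ ≤ −ε. (This shows that the worst-case function f(x) = (L/2)max_{1≤i≤M}(ξ_i x_i + d_i) + 2^{ρ−3}‖x‖₂^ρ, with perturbations 0 < d_i < δ, takes a value below −ε at the point x̄ = −λΣ_i ξ_i e_i of the Euclidean ball of radius R, while remaining positive along the method's trajectory.) -/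
/-!
Write `a = R / √M` and `b` for the second branch of `λ`, so that `λ = min a b` and `b` is the
stationary point of `t ↦ -(L/2) t + 2^(ρ-3) M^(ρ/2) t^ρ`. Since `λ ≤ b`, the power term is at most
`L λ / (2ρ)`, so the left-hand side is at most `δ - L λ (ρ-1)/(2ρ)`, and it remains to bound the
minimum defining `δ + ε` by `L λ (ρ-1)/(2ρ)`. If `λ = a` this follows from `(ρ-1)/(2ρ) ≥ 1/4`. If
`λ = b`, taking logarithms reduces it to `ρ^ρ ≤ 2^ρ (ρ-1)^(ρ-1)`, i.e. `ρ/2 ≤ (1 + (ρ-2)/ρ)^(ρ-1)`,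
which is Bernoulli's inequality.
-/

open Real

theorem div_two_le_rpow_of_two_le {ρ : ℝ} (hρ : 2 ≤ ρ) :
    ρ / 2 ≤ (2 * (ρ - 1) / ρ) ^ (ρ - 1) := by
  have hρ0 : 0 < ρ := by linarith
  have bernoulli := one_add_mul_self_le_rpow_one_add (s := (ρ - 2) / ρ) (p := ρ - 1)
    (by rw [le_div_iff₀ hρ0]; linarith) (by linarith)
  have hbase : 1 + (ρ - 2) / ρ = 2 * (ρ - 1) / ρ := by field_simp; ring
  have hgap : 1 + (ρ - 1) * ((ρ - 2) / ρ) - ρ / 2 = (ρ - 2) ^ 2 / (2 * ρ) := by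
    field_simp; ring
  rw [hbase] at bernoulli
  have hgap_nonneg : 0 ≤ (ρ - 2) ^ 2 / (2 * ρ) := by positivity
  linarith

theorem two_rpow_sub_three_mul_rpow_le {ρ L m lam : ℝ} (hρ : 1 < ρ) (hL : 0 ≤ L) (hm : 0 < m)
    (hlam : 0 < lam) (hle : lam ≤ ((2 : ℝ) ^ (2 - ρ) * L / (ρ * m ^ (ρ / 2))) ^ (1 / (ρ - 1))) :
    (2 : ℝ) ^ (ρ - 3) * m ^ (ρ / 2) * lam ^ ρ ≤ L * lam / (2 * ρ) := by
  set c := (2 : ℝ) ^ (2 - ρ) * L / (ρ * m ^ (ρ / 2)) with hc_def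
  have hc : 0 ≤ c := by positivity
  have hlam_c : lam ^ (ρ - 1) ≤ c :=
    calc lam ^ (ρ - 1) ≤ (c ^ (1 / (ρ - 1))) ^ (ρ - 1) :=
          rpow_le_rpow hlam.le hle (by linarith)
      _ = c := by rw [← rpow_mul hc, one_div_mul_cancel (by linarith), rpow_one]
  have htwo : (2 : ℝ) ^ (ρ - 3) * 2 ^ (2 - ρ) = 1 / 2 := by
    rw [← rpow_add two_pos, show ρ - 3 + (2 - ρ) = -1 by ring, rpow_neg_one, one_div]
  calc (2 : ℝ) ^ (ρ - 3) * m ^ (ρ / 2) * lam ^ ρ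
      = (2 : ℝ) ^ (ρ - 3) * m ^ (ρ / 2) * lam ^ (ρ - 1) * lam := by
        rw [rpow_sub_one hlam.ne']; field_simp
    _ ≤ (2 : ℝ) ^ (ρ - 3) * m ^ (ρ / 2) * c * lam := by gcongr
    _ = (2 : ℝ) ^ (ρ - 3) * 2 ^ (2 - ρ) * (L * lam / ρ) := by
        rw [hc_def]; field_simp
    _ = L * lam / (2 * ρ) := by rw [htwo]; ring

theorem rpow_div_le_mul_rpow {ρ L m : ℝ} (hρ : 2 ≤ ρ) (hL : 0 < L) (hm : 0 < m) :
    L ^ (ρ / (ρ - 1)) / (8 * m ^ (ρ / (2 * (ρ - 1)))) ≤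
      L * ((2 : ℝ) ^ (2 - ρ) * L / (ρ * m ^ (ρ / 2))) ^ (1 / (ρ - 1)) * (ρ - 1) / (2 * ρ) := by
  have hρ0 : 0 < ρ := by linarith
  have hu : 0 < ρ - 1 := by linarith
  have hbernoulli := log_le_log (by positivity) (div_two_le_rpow_of_two_le hρ)
  rw [log_rpow (by positivity), log_div (by positivity) hρ0.ne', log_mul two_ne_zero hu.ne',
    log_div hρ0.ne' two_ne_zero] at hbernoulli
  rw [← log_le_log_iff (by positivity) (by positivity),
    log_div (by positivity) (by positivity), log_mul (by positivity) (by positivity),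
    log_rpow hL, log_rpow hm, show (8 : ℝ) = 2 ^ (3 : ℕ) by norm_num, log_pow,
    log_div (by positivity) (by positivity), log_mul (by positivity) hu.ne',
    log_mul hL.ne' (by positivity), log_rpow (by positivity),
    log_div (by positivity) (by positivity), log_mul (by positivity) hL.ne',
    log_mul hρ0.ne' (by positivity), log_rpow two_pos, log_rpow hm, log_mul two_ne_zero hρ0.ne']
  -- In logarithms the `log L` and `log m` terms cancel, and `(ρ - 1)` times the gap is `hbernoulli`.
  rw [← sub_nonneg, ← mul_nonneg_iff_of_pos_left hu]
  field_simp
  push_cast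
  linarith

theorem div_four_le_mul_sub_one_div {ρ x : ℝ} (hρ : 2 ≤ ρ) (hx : 0 ≤ x) :
    x / 4 ≤ x * (ρ - 1) / (2 * ρ) := by
  rw [div_le_div_iff₀ (by norm_num) (by linarith)]
  nlinarith

theorem lower_bound_key_estimate_general
    (ρ L R ε : ℝ) (M : ℕ)
    (hρ : 2 ≤ ρ) (hL : 0 < L) (hR : 0 < R)
    (hM : 0 < M)
    (δ lam : ℝ)
    (hδ : δ = min (L * R / (4 * Real.sqrt M))
        (L ^ (ρ / (ρ - 1)) / (8 * (M : ℝ) ^ (ρ / (2 * (ρ - 1))))) - ε)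
    (hlam : lam = min (R / Real.sqrt M)
        (((2 : ℝ) ^ (2 - ρ) * L / (ρ * (M : ℝ) ^ (ρ / 2))) ^ (1 / (ρ - 1)))) :
    -(L / 2) * lam + (2 : ℝ) ^ (ρ - 3) * (M : ℝ) ^ (ρ / 2) * lam ^ ρ + δ ≤ -ε := by
  have hm : (0 : ℝ) < M := by exact_mod_cast hM
  have hlam_pos : 0 < lam := by rw [hlam]; exact lt_min (by positivity) (by positivity)
  have hpower := two_rpow_sub_three_mul_rpow_le (by linarith) hL.le hm hlam_pos
    (hlam ▸ min_le_right _ _)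
  have hmin : min (L * R / (4 * Real.sqrt M))
      (L ^ (ρ / (ρ - 1)) / (8 * (M : ℝ) ^ (ρ / (2 * (ρ - 1))))) ≤
        L * lam * (ρ - 1) / (2 * ρ) := by
    rcases min_choice (R / Real.sqrt M)
        (((2 : ℝ) ^ (2 - ρ) * L / (ρ * (M : ℝ) ^ (ρ / 2))) ^ (1 / (ρ - 1))) with h | h <;>
      rw [hlam, h]
    · calc _ ≤ L * R / (4 * Real.sqrt M) := min_le_left _ _
        _ = L * (R / Real.sqrt M) / 4 := by ring
        _ ≤ _ := div_four_le_mul_sub_one_div hρ (by positivity)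
    · exact (min_le_right _ _).trans (rpow_div_le_mul_rpow hρ hL hm)
  have hsplit : L * lam / (2 * ρ) + L * lam * (ρ - 1) / (2 * ρ) = L * lam / 2 := by
    field_simp; ring
  linarith

/-- key arithmetic estimate in the proof of the lower
complexity bound, Theorem A.1. -/
theorem lower_bound_key_estimate
    (ρ L R ε : ℝ) (M : ℕ)
    (hρ : 2 ≤ ρ) (hL : 0 < L) (hR : 0 < R)
    (hε0 : 0 < ε) (hε1 : ε < 1) (hM : 0 < M)
    (δ lam : ℝ)
    (hδ : δ = min (L * R / (4 * Real.sqrt M))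
        (L ^ (ρ / (ρ - 1)) / (8 * (M : ℝ) ^ (ρ / (2 * (ρ - 1))))) - ε)
    (hδpos : 0 < δ)
    (hlam : lam = min (R / Real.sqrt M)
        (((2 : ℝ) ^ (2 - ρ) * L / (ρ * (M : ℝ) ^ (ρ / 2))) ^ (1 / (ρ - 1)))) :
    -(L / 2) * lam + (2 : ℝ) ^ (ρ - 3) * (M : ℝ) ^ (ρ / 2) * lam ^ ρ + δ ≤ -ε :=
  lower_bound_key_estimate_general ρ L R ε M hρ hL hR hM δ lam hδ hlam
end

section
/- (Lemma 2.1, symmetrization preserves strong convexity.) Let E be a finite-dimensional real normed vector space and Q ⊆ E a bounded closed convex set containing the origin. Let f be continuous and strongly convex on Q with parameter μ ≥ 0, i.e. f(βx + (1−β)y) ≤ βf(x) + (1−β)f(y) − (μ/2)β(1−β)‖x − y‖² for all x, y ∈ Q and β ∈ [0,1]. Define on Q⁰ = conv(Q ∪ (−Q)) the symmetrization f⁰(x) = min{ f(u) + f(v) : x = u − v, u ∈ αQ, v ∈ (1−α)Q, α ∈ [0,1] }. Then f⁰ is strongly convex on Q⁰ with parameter μ/2: f⁰(βx₁ + (1−β)x₂)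 ≤ βf⁰(x₁) + (1−β)f⁰(x₂) − (μ/4)β(1−β)‖x₁ − x₂‖² for all x₁, x₂ ∈ Q⁰ and β ∈ [0,1]. -/
/-!
Take optimal decompositions `x₁ = u₁ - v₁`, `x₂ = u₂ - v₂`. Their convex combinations
`β u₁ + (1-β) u₂` and `β v₁ + (1-β) v₂` decompose `β x₁ + (1-β) x₂` admissibly (convexity of `Q`
gives `β (α₁ Q) + (1-β) (α₂ Q) = (β α₁ + (1-β) α₂) Q`), and strong convexity of `f` applied to both
parts loses `(μ/2) β (1-β) (‖u₁ - u₂‖² + ‖v₁ - v₂‖²)`. Since `x₁ - x₂ = (u₁ - u₂) - (v₁ - v₂)`,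
this is at least `(μ/4) β (1-β) ‖x₁ - x₂‖²`.
-/

open Pointwise

theorem Convex.smul_add_smul_mem_smul_set {𝕜 E : Type*} [Field 𝕜] [LinearOrder 𝕜]
    [IsStrictOrderedRing 𝕜] [AddCommGroup E] [Module 𝕜 E] {s : Set E} (hs : Convex 𝕜 s)
    {a b α₁ α₂ : 𝕜} (ha : 0 ≤ a) (hb : 0 ≤ b) (hα₁ : 0 ≤ α₁) (hα₂ : 0 ≤ α₂)
    {x y : E} (hx : x ∈ α₁ • s) (hy : y ∈ α₂ • s) :
    a • x + b • y ∈ (a * α₁ + b * α₂) • s := by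
  obtain ⟨p, hp, rfl⟩ := hx
  obtain ⟨q, hq, rfl⟩ := hy
  rw [hs.add_smul (mul_nonneg ha hα₁) (mul_nonneg hb hα₂), smul_smul, smul_smul]
  exact Set.add_mem_add (Set.smul_mem_smul_set hp) (Set.smul_mem_smul_set hq)

theorem norm_sub_sq_le_two_mul {E : Type*} [SeminormedAddCommGroup E] (x y : E) :
    ‖x - y‖ ^ 2 ≤ 2 * (‖x‖ ^ 2 + ‖y‖ ^ 2) :=
  (pow_le_pow_left₀ (norm_nonneg _) (norm_sub_le x y) 2).trans add_sq_le

section Symmetrization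

variable {E : Type*} [NormedAddCommGroup E] [NormedSpace ℝ E]

/-- The symmetrization `f⁰ x` of the paper is the minimum of this set. -/
def symmetrizationValues (Q : Set E) (f : E → ℝ) (x : E) : Set ℝ :=
  {t : ℝ | ∃ u v : E, ∃ α ∈ Set.Icc (0 : ℝ) 1,
    u ∈ α • Q ∧ v ∈ (1 - α) • Q ∧ x = u - v ∧ t = f u + f v}

theorem StrongConvexOn.exists_mem_symmetrizationValues_le {Q : Set E} {f : E → ℝ} {μ : ℝ}
    (hf : StrongConvexOn Q μ f) (hμ : 0 ≤ μ) (h0Q : (0 : E) ∈ Q) {x₁ x₂ : E} {t₁ t₂ : ℝ}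
    (ht₁ : t₁ ∈ symmetrizationValues Q f x₁) (ht₂ : t₂ ∈ symmetrizationValues Q f x₂)
    {a b : ℝ} (ha : 0 ≤ a) (hb : 0 ≤ b) (hab : a + b = 1) :
    ∃ t ∈ symmetrizationValues Q f (a • x₁ + b • x₂),
      t ≤ a * t₁ + b * t₂ - a * b * (μ / 2 / 2 * ‖x₁ - x₂‖ ^ 2) := by
  obtain ⟨u₁, v₁, α₁, ⟨hα₁, hα₁'⟩, hu₁, hv₁, rfl, rfl⟩ := ht₁
  obtain ⟨u₂, v₂, α₂, ⟨hα₂, hα₂'⟩, hu₂, hv₂, rfl, rfl⟩ := ht₂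
  have mem_of_mem_smul {α : ℝ} {w : E} (hα : α ∈ Set.Icc (0 : ℝ) 1) (hw : w ∈ α • Q) :
      w ∈ Q := by
    obtain ⟨q, hq, rfl⟩ := hw
    exact hf.1.smul_mem_of_zero_mem h0Q hq hα
  have hu : a • u₁ + b • u₂ ∈ (a * α₁ + b * α₂) • Q :=
    hf.1.smul_add_smul_mem_smul_set ha hb hα₁ hα₂ hu₁ hu₂
  have hv : a • v₁ + b • v₂ ∈ (1 - (a * α₁ + b * α₂)) • Q := by
    convert hf.1.smul_add_smul_mem_smul_set ha hb (sub_nonneg.2 hα₁') (sub_nonneg.2 hα₂') hv₁ hv₂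
      using 2
    linear_combination -hab
  have hscu := hf.2 (mem_of_mem_smul ⟨hα₁, hα₁'⟩ hu₁) (mem_of_mem_smul ⟨hα₂, hα₂'⟩ hu₂) ha hb hab
  have hscv := hf.2 (mem_of_mem_smul ⟨sub_nonneg.2 hα₁', sub_le_self _ hα₁⟩ hv₁)
    (mem_of_mem_smul ⟨sub_nonneg.2 hα₂', sub_le_self _ hα₂⟩ hv₂) ha hb hab
  have hnorm := mul_le_mul_of_nonneg_left (norm_sub_sq_le_two_mul (u₁ - u₂) (v₁ - v₂))
    (by positivity : 0 ≤ a * b * μ / 4)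
  refine ⟨_, ⟨_, _, a * α₁ + b * α₂, ⟨by positivity, by nlinarith⟩, hu, hv, by module, rfl⟩, ?_⟩
  rw [show u₁ - v₁ - (u₂ - v₂) = u₁ - u₂ - (v₁ - v₂) by abel]
  simp only [smul_eq_mul] at hscu hscv
  linarith

theorem StrongConvexOn.symmetrization {Q S : Set E} {f f0 : E → ℝ} {μ : ℝ}
    (hf : StrongConvexOn Q μ f) (hμ : 0 ≤ μ) (h0Q : (0 : E) ∈ Q) (hS : Convex ℝ S)
    (hf0 : ∀ x ∈ S, IsLeast (symmetrizationValues Q f x) (f0 x)) :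
    StrongConvexOn S (μ / 2) f0 := by
  refine ⟨hS, fun x₁ hx₁ x₂ hx₂ a b ha hb hab => ?_⟩
  obtain ⟨t, ht, hle⟩ := hf.exists_mem_symmetrizationValues_le hμ h0Q
    (hf0 x₁ hx₁).1 (hf0 x₂ hx₂).1 ha hb hab
  simpa only [smul_eq_mul] using ((hf0 _ (hS hx₁ hx₂ ha hb hab)).2 ht).trans hle

end Symmetrization

theorem symmetrization_strongly_convex_general
    {E : Type*} [NormedAddCommGroup E] [NormedSpace ℝ E]
    (Q : Set E)
    (hQconv : Convex ℝ Q) (h0Q : (0 : E) ∈ Q)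
    (f : E → ℝ)
    (μ : ℝ) (hμ : 0 ≤ μ)
    (hsc : ∀ x ∈ Q, ∀ y ∈ Q, ∀ β ∈ Set.Icc (0 : ℝ) 1,
      f (β • x + (1 - β) • y) ≤
        β * f x + (1 - β) * f y - (μ / 2) * β * (1 - β) * ‖x - y‖ ^ 2)
    (f0 : E → ℝ)
    (hf0 : ∀ x ∈ convexHull ℝ (Q ∪ (-Q)),
      IsLeast {t : ℝ | ∃ u v : E, ∃ α ∈ Set.Icc (0 : ℝ) 1,
        u ∈ α • Q ∧ v ∈ (1 - α) • Q ∧ x = u - v ∧ t = f u + f v} (f0 x)) :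
    ∀ x₁ ∈ convexHull ℝ (Q ∪ (-Q)), ∀ x₂ ∈ convexHull ℝ (Q ∪ (-Q)),
      ∀ β ∈ Set.Icc (0 : ℝ) 1,
        f0 (β • x₁ + (1 - β) • x₂) ≤
          β * f0 x₁ + (1 - β) * f0 x₂ -
            (μ / 4) * β * (1 - β) * ‖x₁ - x₂‖ ^ 2 := by
  have hf : StrongConvexOn Q μ f := by
    refine ⟨hQconv, fun x hx y hy a b ha hb hab => ?_⟩
    obtain rfl : b = 1 - a := by linarith
    have := hsc x hx y hy a ⟨ha, by linarith⟩
    simp only [smul_eq_mul]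
    linarith
  intro x₁ hx₁ x₂ hx₂ β hβ
  have := (hf.symmetrization hμ h0Q (convex_convexHull ℝ _) hf0).2 hx₁ hx₂ hβ.1
    (sub_nonneg.2 hβ.2) (add_sub_cancel _ _)
  simp only [smul_eq_mul] at this
  linarith

/-- Lemma 2.1, symmetrization preserves strong convexity.
`f⁰` is the symmetrization of a strongly convex function `f` on `Q`; it is
strongly convex with parameter `μ/2` on `Q⁰ = conv(Q ∪ (−Q))`. -/
theorem symmetrization_strongly_convex
    {E : Type*} [NormedAddCommGroup E] [NormedSpace ℝ E] [FiniteDimensional ℝ E]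
    (Q : Set E) (hQb : Bornology.IsBounded Q) (hQc : IsClosed Q)
    (hQconv : Convex ℝ Q) (h0Q : (0 : E) ∈ Q)
    (f : E → ℝ) (hfc : ContinuousOn f Q)
    (μ : ℝ) (hμ : 0 ≤ μ)
    (hsc : ∀ x ∈ Q, ∀ y ∈ Q, ∀ β ∈ Set.Icc (0 : ℝ) 1,
      f (β • x + (1 - β) • y) ≤
        β * f x + (1 - β) * f y - (μ / 2) * β * (1 - β) * ‖x - y‖ ^ 2)
    (f0 : E → ℝ)
    (hf0 : ∀ x ∈ convexHull ℝ (Q ∪ (-Q)),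
      IsLeast {t : ℝ | ∃ u v : E, ∃ α ∈ Set.Icc (0 : ℝ) 1,
        u ∈ α • Q ∧ v ∈ (1 - α) • Q ∧ x = u - v ∧ t = f u + f v} (f0 x)) :
    ∀ x₁ ∈ convexHull ℝ (Q ∪ (-Q)), ∀ x₂ ∈ convexHull ℝ (Q ∪ (-Q)),
      ∀ β ∈ Set.Icc (0 : ℝ) 1,
        f0 (β • x₁ + (1 - β) • x₂) ≤
          β * f0 x₁ + (1 - β) * f0 x₂ -
            (μ / 4) * β * (1 - β) * ‖x₁ - x₂‖ ^ 2 :=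
  symmetrization_strongly_convex_general Q hQconv h0Q f μ hμ hsc f0 hf0
end

section
/- (Lemma B.1, primal-dual gap bound.) Let Q ⊆ E and S ⊆ F be nonempty compact convex subsets of finite-dimensional real normed spaces, and let Ψ : Q × S → ℝ be continuous, convex in x for each fixed w ∈ S, concave in w for each fixed x ∈ Q, and such that for each w ∈ S the function Ψ(·,w) is uniformly convex on Q with parameters ρ ≥ 2 and μ(Ψ) > 0 with respect to the norm of E. Define f(x) = max_{w∈S} Ψ(x,w) and η(w) = min_{x∈Q} Ψ(x,w). Let x₀,…,x_N ∈ Q; for each i let w_i ∈ Argmax_{w∈S} Ψ(x_i,w) and let g_i ∈ E* be a subgradient of Ψ(·,w_i) at x_i. Set x̄_N = (1/(N+1))Σ_{i=0}^{N} x_i and w̄_N = (1/(N+1))Σ_{i=0}^{N} w_i. Then f(x̄_N) − η(w̄_N) ≤ max_{x∈Q} { (1/(N+1)) Σ_{i=0}^{N} ⟨g_i, x_i − x⟩ − (μ(Ψ)/2)‖x − x̄_N‖^ρ }. -/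
/-!
Uniform convexity upgrades each subgradient inequality to
`Ψ y wᵢ ≥ f xᵢ + gᵢ (y - xᵢ) + μ/2 ‖y - xᵢ‖^ρ`: divide the defining inequality on the segment
from `xᵢ` to `y` by `α` and let `α → 0⁺`. Average these at a minimiser `y` of `Ψ · w̄`:
concavity in `w` bounds the average of the left-hand sides by `η w̄`, Jensen for `‖·‖^ρ` bounds
the average of `‖y - xᵢ‖^ρ` below by `‖y - x̄‖^ρ`, and `f x̄` is at most the average of the
`f xᵢ` because `f`, a pointwise maximum of convex functions, is convex.
-/

open Filter Topology

section UniformConvexity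

variable {E : Type*} [SeminormedAddCommGroup E]

def IsUniformlyConvexOn [Module ℝ E] (Q : Set E) (ρ μ : ℝ) (h : E → ℝ) : Prop :=
  ∀ x ∈ Q, ∀ y ∈ Q, ∀ α ∈ Set.Icc (0 : ℝ) 1,
    h (α • x + (1 - α) • y) ≤ α * h x + (1 - α) * h y -
      (μ / 2) * α * (1 - α) * (α ^ (ρ - 1) + (1 - α) ^ (ρ - 1)) * ‖x - y‖ ^ ρ

theorem tendsto_uniformConvexityWeight_nhdsGT_zero {ρ : ℝ} (hρ : 1 < ρ) :
    Tendsto (fun α : ℝ => (1 - α) * (α ^ (ρ - 1) + (1 - α) ^ (ρ - 1))) (𝓝[>] 0) (𝓝 1) := by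
  have hcont : ContinuousAt (fun α : ℝ => (1 - α) * (α ^ (ρ - 1) + (1 - α) ^ (ρ - 1))) 0 := by
    fun_prop (disch := exact Or.inr (by linarith))
  simpa [Real.zero_rpow (sub_ne_zero.2 hρ.ne')] using hcont.tendsto.mono_left nhdsWithin_le_nhds

theorem IsUniformlyConvexOn.add_norm_rpow_le_of_subgradient [Module ℝ E] {Q : Set E}
    {ρ μ : ℝ} {h : E → ℝ} (huc : IsUniformlyConvexOn Q ρ μ h) (hQ : Convex ℝ Q) (hρ : 1 < ρ)
    {x y : E} (hx : x ∈ Q) (hy : y ∈ Q) {g : E →ₗ[ℝ] ℝ}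
    (hg : ∀ z ∈ Q, h x + g (z - x) ≤ h z) :
    h x + g (y - x) + μ / 2 * ‖y - x‖ ^ ρ ≤ h y := by
  have hlim := (((tendsto_uniformConvexityWeight_nhdsGT_zero hρ).const_mul (μ / 2)).mul_const
    (‖y - x‖ ^ ρ)).const_add (h x + g (y - x))
  rw [mul_one] at hlim
  refine le_of_tendsto hlim ?_
  filter_upwards [Ioo_mem_nhdsGT one_pos] with α ⟨hα0, hα1⟩
  have hsub := hg _ (hQ hy hx hα0.le (sub_nonneg.2 hα1.le) (add_sub_cancel α 1))
  rw [show α • y + (1 - α) • x - x = α • (y - x) by module, map_smul, smul_eq_mul] at hsub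
  have hunif := huc y hy x hx α ⟨hα0.le, hα1.le⟩
  refine le_of_mul_le_mul_left ?_ hα0
  nlinarith

theorem convexOn_univ_norm_rpow [NormedSpace ℝ E] {ρ : ℝ} (hρ : 1 ≤ ρ) :
    ConvexOn ℝ Set.univ (fun v : E => ‖v‖ ^ ρ) := by
  refine ⟨convex_univ, fun u _ v _ a b ha hb hab => ?_⟩
  calc ‖a • u + b • v‖ ^ ρ ≤ (a * ‖u‖ + b * ‖v‖) ^ ρ := by
        gcongr
        exact convexOn_univ_norm.2 trivial trivial ha hb hab
    _ ≤ a * ‖u‖ ^ ρ + b * ‖v‖ ^ ρ :=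
        (convexOn_rpow hρ).2 (norm_nonneg u) (norm_nonneg v) ha hb hab

end UniformConvexity

theorem convexOn_of_isGreatest {E F : Type*} [AddCommGroup E] [Module ℝ E] {Q : Set E}
    {S : Set F} (hQ : Convex ℝ Q) {Ψ : E → F → ℝ} (hΨ : ∀ w ∈ S, ConvexOn ℝ Q (Ψ · w))
    {f : E → ℝ} (hf : ∀ x ∈ Q, IsGreatest ((Ψ x ·) '' S) (f x)) : ConvexOn ℝ Q f := by
  refine ⟨hQ, fun x hx y hy a b ha hb hab => ?_⟩
  obtain ⟨w, hw, hfw⟩ := (hf _ (hQ hx hy ha hb hab)).1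
  rw [← hfw]
  calc Ψ (a • x + b • y) w ≤ a • Ψ x w + b • Ψ y w := (hΨ w hw).2 hx hy ha hb hab
    _ ≤ a • f x + b • f y := by
        gcongr
        · exact (hf x hx).2 ⟨w, hw, rfl⟩
        · exact (hf y hy).2 ⟨w, hw, rfl⟩

section SaddleFunction

variable {E F ι : Type*} [SeminormedAddCommGroup E] [NormedSpace ℝ E] [AddCommGroup F]
  [Module ℝ F] {Q : Set E} {S : Set F} {Ψ : E → F → ℝ} {f : E → ℝ} {ρ μ : ℝ}
  {t : Finset ι} {c : ι → ℝ} {x : ι → E} {w : ι → F} {g : ι → E →ₗ[ℝ] ℝ}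

theorem sum_subgradient_model_le_apply_sum_smul (hc0 : ∀ i ∈ t, 0 ≤ c i)
    (hc1 : ∑ i ∈ t, c i = 1) (hQ : Convex ℝ Q) (hΨw : ∀ y ∈ Q, ConcaveOn ℝ S (Ψ y ·))
    (hρ : 1 < ρ) (hμ : 0 ≤ μ) (huc : ∀ v ∈ S, IsUniformlyConvexOn Q ρ μ (Ψ · v))
    (hx : ∀ i ∈ t, x i ∈ Q) (hw : ∀ i ∈ t, w i ∈ S)
    (hwmax : ∀ i ∈ t, Ψ (x i) (w i) = f (x i))
    (hg : ∀ i ∈ t, ∀ z ∈ Q, Ψ (x i) (w i) + g i (z - x i) ≤ Ψ z (w i)) {y : E} (hy : y ∈ Q) :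
    ∑ i ∈ t, c i * (f (x i) - g i (x i - y)) + μ / 2 * ‖y - ∑ i ∈ t, c i • x i‖ ^ ρ ≤
      Ψ y (∑ i ∈ t, c i • w i) := by
  have hjensen : ‖y - ∑ i ∈ t, c i • x i‖ ^ ρ ≤ ∑ i ∈ t, c i * ‖y - x i‖ ^ ρ := by
    have hcenter : y - ∑ i ∈ t, c i • x i = ∑ i ∈ t, c i • (y - x i) := by
      simp only [smul_sub, Finset.sum_sub_distrib, ← Finset.sum_smul, hc1, one_smul]
    simpa only [hcenter, smul_eq_mul] using
      (convexOn_univ_norm_rpow hρ.le).map_sum_le hc0 hc1 (fun i _ => Set.mem_univ (y - x i))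
  have hsplit : ∑ i ∈ t, c i * (Ψ (x i) (w i) + g i (y - x i) + μ / 2 * ‖y - x i‖ ^ ρ) =
      ∑ i ∈ t, c i * (f (x i) - g i (x i - y)) + μ / 2 * ∑ i ∈ t, c i * ‖y - x i‖ ^ ρ := by
    rw [Finset.mul_sum, ← Finset.sum_add_distrib]
    refine Finset.sum_congr rfl fun i hi => ?_
    rw [hwmax i hi, ← neg_sub y, map_neg]
    ring
  calc ∑ i ∈ t, c i * (f (x i) - g i (x i - y)) + μ / 2 * ‖y - ∑ i ∈ t, c i • x i‖ ^ ρ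
      ≤ ∑ i ∈ t, c i * (Ψ (x i) (w i) + g i (y - x i) + μ / 2 * ‖y - x i‖ ^ ρ) := by
        rw [hsplit]
        exact add_le_add_right (mul_le_mul_of_nonneg_left hjensen (div_nonneg hμ zero_le_two)) _
    _ ≤ ∑ i ∈ t, c i * Ψ y (w i) := Finset.sum_le_sum fun i hi =>
        mul_le_mul_of_nonneg_left ((huc (w i) (hw i hi)).add_norm_rpow_le_of_subgradient hQ hρ
          (hx i hi) hy (hg i hi)) (hc0 i hi)
    _ ≤ Ψ y (∑ i ∈ t, c i • w i) := by
        simpa only [smul_eq_mul] using (hΨw y hy).le_map_sum hc0 hc1 hw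

theorem exists_primal_dual_gap_le {η : F → ℝ} (hc0 : ∀ i ∈ t, 0 ≤ c i)
    (hc1 : ∑ i ∈ t, c i = 1) (hQ : Convex ℝ Q) (hS : Convex ℝ S)
    (hΨx : ∀ v ∈ S, ConvexOn ℝ Q (Ψ · v)) (hΨw : ∀ y ∈ Q, ConcaveOn ℝ S (Ψ y ·))
    (hρ : 1 < ρ) (hμ : 0 ≤ μ) (huc : ∀ v ∈ S, IsUniformlyConvexOn Q ρ μ (Ψ · v))
    (hf : ∀ y ∈ Q, IsGreatest ((Ψ y ·) '' S) (f y))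
    (hη : ∀ v ∈ S, IsLeast ((Ψ · v) '' Q) (η v))
    (hx : ∀ i ∈ t, x i ∈ Q) (hw : ∀ i ∈ t, w i ∈ S)
    (hwmax : ∀ i ∈ t, Ψ (x i) (w i) = f (x i))
    (hg : ∀ i ∈ t, ∀ z ∈ Q, Ψ (x i) (w i) + g i (z - x i) ≤ Ψ z (w i)) :
    ∃ y ∈ Q, f (∑ i ∈ t, c i • x i) - η (∑ i ∈ t, c i • w i) ≤
      ∑ i ∈ t, c i * g i (x i - y) - μ / 2 * ‖y - ∑ i ∈ t, c i • x i‖ ^ ρ := by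
  obtain ⟨y, hy, hηy : Ψ y _ = η _⟩ := (hη _ (hS.sum_mem hc0 hc1 hw)).1
  refine ⟨y, hy, ?_⟩
  have hprimal : f (∑ i ∈ t, c i • x i) ≤ ∑ i ∈ t, c i * f (x i) := by
    simpa only [smul_eq_mul] using (convexOn_of_isGreatest hQ hΨx hf).map_sum_le hc0 hc1 hx
  have hdual := sum_subgradient_model_le_apply_sum_smul hc0 hc1 hQ hΨw hρ hμ huc hx hw hwmax hg hy
  rw [hηy] at hdual
  simp only [mul_sub, Finset.sum_sub_distrib] at hdual
  linarith

end SaddleFunction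

theorem primal_dual_gap_bound_general
    {E : Type*} [NormedAddCommGroup E] [NormedSpace ℝ E]
    {F : Type*} [NormedAddCommGroup F] [NormedSpace ℝ F]
    (Q : Set E) (S : Set F)
    (hQconv : Convex ℝ Q) (hSconv : Convex ℝ S)
    (Ψ : E → F → ℝ)
    (hconvx : ∀ w ∈ S, ConvexOn ℝ Q (fun x => Ψ x w))
    (hconcw : ∀ x ∈ Q, ConcaveOn ℝ S (fun w => Ψ x w))
    (ρ μΨ : ℝ) (hρ : 2 ≤ ρ) (hμΨ : 0 < μΨ)
    (huc : ∀ w ∈ S, ∀ x ∈ Q, ∀ y ∈ Q, ∀ α ∈ Set.Icc (0 : ℝ) 1,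
      Ψ (α • x + (1 - α) • y) w ≤
        α * Ψ x w + (1 - α) * Ψ y w -
          (μΨ / 2) * α * (1 - α) * (α ^ (ρ - 1) + (1 - α) ^ (ρ - 1)) * ‖x - y‖ ^ ρ)
    (f : E → ℝ) (hf : ∀ x ∈ Q, IsGreatest ((fun w => Ψ x w) '' S) (f x))
    (η : F → ℝ) (hη : ∀ w ∈ S, IsLeast ((fun x => Ψ x w) '' Q) (η w))
    (N : ℕ) (xs : ℕ → E) (hxs : ∀ i, xs i ∈ Q)
    (w : ℕ → F) (hwS : ∀ i, w i ∈ S)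
    (hwmax : ∀ i, Ψ (xs i) (w i) = f (xs i))
    (g : ℕ → E →L[ℝ] ℝ)
    (hg : ∀ i, ∀ y ∈ Q, Ψ (xs i) (w i) + (g i) (y - xs i) ≤ Ψ y (w i))
    (xbarN : E) (hxbarN : xbarN = (1 / ((N : ℝ) + 1)) • ∑ i ∈ Finset.range (N + 1), xs i)
    (wbarN : F) (hwbarN : wbarN = (1 / ((N : ℝ) + 1)) • ∑ i ∈ Finset.range (N + 1), w i)
    (lstar : ℝ)
    (hlstar : IsGreatest
      ((fun x => (1 / ((N : ℝ) + 1)) *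
          (∑ i ∈ Finset.range (N + 1), (g i) (xs i - x)) -
          (μΨ / 2) * ‖x - xbarN‖ ^ ρ) '' Q) lstar) :
    f xbarN - η wbarN ≤ lstar := by
  set c : ℝ := 1 / ((N : ℝ) + 1)
  have hc0 : ∀ i ∈ Finset.range (N + 1), 0 ≤ c := fun _ _ => by positivity
  have hc1 : ∑ _i ∈ Finset.range (N + 1), c = 1 := by
    simp only [Finset.sum_const, Finset.card_range, nsmul_eq_mul, c]
    push_cast
    field_simp
  obtain ⟨y, hy, hgap⟩ := exists_primal_dual_gap_le (g := fun i => (g i).toLinearMap) hc0 hc1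
    hQconv hSconv hconvx hconcw (by linarith) hμΨ.le huc hf hη (fun i _ => hxs i)
    (fun i _ => hwS i) (fun i _ => hwmax i) (fun i _ => hg i)
  rw [← Finset.smul_sum, ← Finset.smul_sum, ← hxbarN, ← hwbarN, ← Finset.mul_sum] at hgap
  exact hgap.trans (hlstar.2 ⟨y, hy, rfl⟩)

/-- Lemma B.1, primal-dual gap bound. `Ψ` is a
convex-concave saddle function on `Q × S`, uniformly convex in `x` with
parameters `ρ ≥ 2`, `μΨ > 0`; `f` is the primal and `η` the dual objective,
`w i` are maximizers defining subgradients `g i` of `f` at `xs i`, and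
`lstar` is the max appearing on the right-hand side. -/
theorem primal_dual_gap_bound
    {E : Type*} [NormedAddCommGroup E] [NormedSpace ℝ E] [FiniteDimensional ℝ E]
    {F : Type*} [NormedAddCommGroup F] [NormedSpace ℝ F] [FiniteDimensional ℝ F]
    (Q : Set E) (S : Set F) (hQne : Q.Nonempty) (hSne : S.Nonempty)
    (hQcomp : IsCompact Q) (hScomp : IsCompact S)
    (hQconv : Convex ℝ Q) (hSconv : Convex ℝ S)
    (Ψ : E → F → ℝ)
    (hΨcont : ContinuousOn (fun p : E × F => Ψ p.1 p.2) (Q ×ˢ S))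
    (hconvx : ∀ w ∈ S, ConvexOn ℝ Q (fun x => Ψ x w))
    (hconcw : ∀ x ∈ Q, ConcaveOn ℝ S (fun w => Ψ x w))
    (ρ μΨ : ℝ) (hρ : 2 ≤ ρ) (hμΨ : 0 < μΨ)
    (huc : ∀ w ∈ S, ∀ x ∈ Q, ∀ y ∈ Q, ∀ α ∈ Set.Icc (0 : ℝ) 1,
      Ψ (α • x + (1 - α) • y) w ≤
        α * Ψ x w + (1 - α) * Ψ y w -
          (μΨ / 2) * α * (1 - α) * (α ^ (ρ - 1) + (1 - α) ^ (ρ - 1)) * ‖x - y‖ ^ ρ)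
    (f : E → ℝ) (hf : ∀ x ∈ Q, IsGreatest ((fun w => Ψ x w) '' S) (f x))
    (η : F → ℝ) (hη : ∀ w ∈ S, IsLeast ((fun x => Ψ x w) '' Q) (η w))
    (N : ℕ) (xs : ℕ → E) (hxs : ∀ i, xs i ∈ Q)
    (w : ℕ → F) (hwS : ∀ i, w i ∈ S)
    (hwmax : ∀ i, Ψ (xs i) (w i) = f (xs i))
    (g : ℕ → E →L[ℝ] ℝ)
    (hg : ∀ i, ∀ y ∈ Q, Ψ (xs i) (w i) + (g i) (y - xs i) ≤ Ψ y (w i))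
    (xbarN : E) (hxbarN : xbarN = (1 / ((N : ℝ) + 1)) • ∑ i ∈ Finset.range (N + 1), xs i)
    (wbarN : F) (hwbarN : wbarN = (1 / ((N : ℝ) + 1)) • ∑ i ∈ Finset.range (N + 1), w i)
    (lstar : ℝ)
    (hlstar : IsGreatest
      ((fun x => (1 / ((N : ℝ) + 1)) *
          (∑ i ∈ Finset.range (N + 1), (g i) (xs i - x)) -
          (μΨ / 2) * ‖x - xbarN‖ ^ ρ) '' Q) lstar) :
    f xbarN - η wbarN ≤ lstar :=
  primal_dual_gap_bound_general Q S hQconv hSconv Ψ hconvx hconcw ρ μΨ hρ hμΨ huc f hf η hη N xs hxs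
    w hwS hwmax g hg xbarN hxbarN wbarN hwbarN lstar hlstar
end
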